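/- arXiv:2509.16807 — 8 statements merged into one kernel-verified Lean document; each statement's English description precedes it below -/
import Mathlib

section
/- Let V be an n-dimensional subspace of ℓ∞^N written as V = {x ∈ ℝ^N : ⟨f^1,x⟩ = ⋯ = ⟨f^m,x⟩ = 0}, N = n + m, for linearly independent f^1,…,f^m. If there exists an index set S ⊆ {1,…,N} of size m with det(F_S) ≠ 0 such that ‖h(S)^k‖₁ ≤ 2 for all k ∈ S, then V is isometrically isomorphic to ℓ∞^n, i.e., there exists a linear isometric isomorphism from V (with the sup norm inherited from ℓ∞^N) onto ℓ∞^n. -/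
open Matrix Finset

noncomputable section

/-- The ℓ1 norm on ℝ^N. -/
def l1norm {N : ℕ} (x : Fin N → ℝ) : ℝ := ∑ i, |x i|

/-- The matrix `F` whose columns are the vectors `f 0, …, f (m-1)`. -/
def colMat {N m : ℕ} (f : Fin m → Fin N → ℝ) : Matrix (Fin N) (Fin m) ℝ :=
  Matrix.of fun i j => f j i

/-- The row-submatrix `F_S` of `F` (rows indexed by `S`, taken in increasing order). -/
def rowSub {N m : ℕ} (F : Matrix (Fin N) (Fin m) ℝ) (S : Finset (Fin N)) (hS : S.card = m) :
    Matrix (Fin m) (Fin m) ℝ :=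
  Matrix.of fun j l => F (S.orderIsoOfFin hS j) l

/-- The vector `h(S)^k`, defined entrywise by
`h(S)^k_i = det(F_S[row_k ← row_i]) / det(F_S)`. -/
def hVec {N m : ℕ} (F : Matrix (Fin N) (Fin m) ℝ) (S : Finset (Fin N)) (hS : S.card = m)
    (k : Fin N) (hk : k ∈ S) : Fin N → ℝ :=
  fun i =>
    (Matrix.updateRow (rowSub F S hS) ((S.orderIsoOfFin hS).symm ⟨k, hk⟩) (fun l => F i l)).det
      / (rowSub F S hS).det

/-- The matrix `H(S)` whose columns are the vectors `h(S)^k`, `k ∈ S` (in increasing order). -/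
def Hmat {N m : ℕ} (F : Matrix (Fin N) (Fin m) ℝ) (S : Finset (Fin N)) (hS : S.card = m) :
    Matrix (Fin N) (Fin m) ℝ :=
  Matrix.of fun i j => hVec F S hS (S.orderIsoOfFin hS j) (S.orderIsoOfFin hS j).2 i

/-- The subspace `V = {x ∈ ℝ^N : ⟨f^1,x⟩ = ⋯ = ⟨f^m,x⟩ = 0}`. -/
def Vsub {N m : ℕ} (f : Fin m → Fin N → ℝ) : Submodule ℝ (Fin N → ℝ) where
  carrier := {x | ∀ j, ∑ i, f j i * x i = 0}
  zero_mem' := by simp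
  add_mem' := by
    intro a b ha hb j
    have h : ∀ i ∈ Finset.univ, f j i * (a + b) i = f j i * a i + f j i * b i := fun i _ => by
      simp only [Pi.add_apply]; ring
    rw [Finset.sum_congr rfl h, Finset.sum_add_distrib, ha j, hb j, add_zero]
  smul_mem' := by
    intro c a ha
    intro j
    have h : ∀ i ∈ Finset.univ, f j i * (c • a) i = c * (f j i * a i) := fun i _ => by
      simp only [Pi.smul_apply, smul_eq_mul]; ring
    rw [Finset.sum_congr rfl h, ← Finset.mul_sum, ha j, mul_zero]

/-- `P` is a projection from `ℓ∞^N` onto `V`: its range is `V` and it fixes `V` pointwise. -/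
def IsProjOnto {N : ℕ} (V : Submodule ℝ (Fin N → ℝ))
    (P : (Fin N → ℝ) →L[ℝ] (Fin N → ℝ)) : Prop :=
  LinearMap.range (P : (Fin N → ℝ) →ₗ[ℝ] (Fin N → ℝ)) = V ∧ ∀ v ∈ V, P v = v

/-! ### Auxiliary lemmas -/

/-- Linearity of the determinant in one row, over finite sums. -/
lemma my_det_updateRow_finset_sum {m : ℕ} (M : Matrix (Fin m) (Fin m) ℝ) (p : Fin m)
    {ι : Type*} [DecidableEq ι] (s : Finset ι) (c : ι → ℝ) (u : ι → Fin m → ℝ) :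
    (M.updateRow p (∑ l ∈ s, c l • u l)).det = ∑ l ∈ s, c l * (M.updateRow p (u l)).det := by
  induction s using Finset.induction_on with
  | empty => simpa using Matrix.det_updateRow_smul M p 0 0
  | insert _ _ hk ih =>
      rw [Finset.sum_insert hk, Matrix.det_updateRow_add, Matrix.det_updateRow_smul, ih,
        Finset.sum_insert hk]

/-- On indices in `S`, the vector `h(S)^k` is the indicator of `k`. -/
lemma hVec_on_S {N m : ℕ} (F : Matrix (Fin N) (Fin m) ℝ) (S : Finset (Fin N)) (hS : S.card = m)
    (hdet : (rowSub F S hS).det ≠ 0)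
    (k : Fin N) (hk : k ∈ S) (i : Fin N) (hi : i ∈ S) :
    hVec F S hS k hk i = if i = k then 1 else 0 := by
  set e := S.orderIsoOfFin hS
  have hrow : (fun l => F i l) = rowSub F S hS (e.symm ⟨i, hi⟩) := by
    funext l
    show F i l = F (↑(e (e.symm ⟨i, hi⟩))) l
    rw [e.apply_symm_apply]
  by_cases h : i = k
  · subst h
    simp [hVec, hrow, e, Matrix.updateRow_eq_self, div_self hdet]
  · have hne : e.symm ⟨k, hk⟩ ≠ e.symm ⟨i, hi⟩ := by
      intro hc
      exact h (Subtype.ext_iff.mp (e.symm.injective hc)).symm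
    rw [hVec, hrow]
    rw [Matrix.det_zero_of_row_eq hne, zero_div, if_neg h]
    rw [Matrix.updateRow_self, Matrix.updateRow_ne (Ne.symm hne)]

/-- The vector `h(S)^k` lies in the span of the rows `f^j`, hence annihilates `V`. -/
lemma sum_hVec_mul {N m : ℕ} (f : Fin m → Fin N → ℝ) (S : Finset (Fin N)) (hS : S.card = m)
    (k : Fin N) (hk : k ∈ S) (x : Fin N → ℝ) (hx : ∀ j, ∑ i, f j i * x i = 0) :
    ∑ i, hVec (colMat f) S hS k hk i * x i = 0 := by
  set M := rowSub (colMat f) S hS with hM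
  set p := (S.orderIsoOfFin hS).symm ⟨k, hk⟩ with hp
  set Δ := M.det with hΔ
  set c : Fin m → ℝ := fun l => (M.updateRow p (Pi.single l 1)).det / Δ with hc
  have hdecomp : ∀ i : Fin N, hVec (colMat f) S hS k hk i = ∑ l, f l i * c l := by
    intro i
    have h1 : (fun l => colMat f i l) = ∑ l, colMat f i l • (Pi.single l 1 : Fin m → ℝ) := by
      funext l'
      simp [Pi.single_apply]
    show (M.updateRow p (fun l => colMat f i l)).det / Δ = _
    rw [h1, my_det_updateRow_finset_sum, Finset.sum_div]
    refine Finset.sum_congr rfl fun l _ => ?_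
    show colMat f i l * _ / Δ = f l i * c l
    rw [mul_div_assoc]
    rfl
  calc ∑ i, hVec (colMat f) S hS k hk i * x i
      = ∑ i, ∑ l, (f l i * c l) * x i := by
        refine Finset.sum_congr rfl fun i _ => ?_
        rw [hdecomp i, Finset.sum_mul]
    _ = ∑ l, ∑ i, (f l i * c l) * x i := Finset.sum_comm
    _ = ∑ l, c l * ∑ i, f l i * x i := by
        refine Finset.sum_congr rfl fun l _ => ?_
        rw [Finset.mul_sum]
        exact Finset.sum_congr rfl fun i _ => by ring
    _ = 0 := by simp [hx]

theorem subspace_isometric_to_linf_of_hVec_l1_le_two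
    {N n m : ℕ} (hN : N = n + m) (f : Fin m → Fin N → ℝ)
    (hf : LinearIndependent ℝ f)
    (hex : ∃ (S : Finset (Fin N)) (hS : S.card = m),
      (rowSub (colMat f) S hS).det ≠ 0 ∧
      ∀ (k : Fin N) (hk : k ∈ S), l1norm (hVec (colMat f) S hS k hk) ≤ 2) :
    Nonempty ((Vsub f) ≃ₗᵢ[ℝ] (Fin n → ℝ)) := by
  obtain ⟨S, hS, hdet, hbound⟩ := hex
  -- the complement of S has cardinality n
  have hT : Sᶜ.card = n := by
    have := Finset.card_compl S
    simp only [Fintype.card_fin] at this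
    omega
  set g := Sᶜ.orderIsoOfFin hT with hg
  -- the key estimate: coordinates in S are controlled by coordinates outside S
  have key : ∀ x ∈ Vsub f, ∀ C : ℝ, 0 ≤ C → (∀ i, i ∉ S → |x i| ≤ C) → ∀ i, |x i| ≤ C := by
    intro x hx C hC hbd i
    by_cases hi : i ∈ S
    · set h := hVec (colMat f) S hS i hi with hh
      have hsum : ∑ j ∈ S, h j * x j + ∑ j ∈ Sᶜ, h j * x j = 0 := by
        rw [Finset.sum_add_sum_compl]
        exact sum_hVec_mul f S hS i hi x hx
      have hSsum : ∑ j ∈ S, h j * x j = x i := by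
        have : ∀ j ∈ S, h j * x j = if j = i then x j else 0 := by
          intro j hj
          rw [hh, hVec_on_S (colMat f) S hS hdet i hi j hj]
          split <;> simp
        rw [Finset.sum_congr rfl this, Finset.sum_ite_eq' S i (fun j => x j), if_pos hi]
      have hxi : x i = -∑ j ∈ Sᶜ, h j * x j := by linarith
      have hindS : ∑ j ∈ S, |h j| = 1 := by
        have : ∀ j ∈ S, |h j| = if j = i then 1 else 0 := by
          intro j hj
          rw [hh, hVec_on_S (colMat f) S hS hdet i hi j hj]
          split <;> simp
        rw [Finset.sum_congr rfl this, Finset.sum_ite_eq' S i (fun _ => (1:ℝ)), if_pos hi]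
      have hl1 : ∑ j ∈ Sᶜ, |h j| ≤ 1 := by
        have h2 : l1norm h ≤ 2 := hbound i hi
        have hsplit : ∑ j ∈ S, |h j| + ∑ j ∈ Sᶜ, |h j| = l1norm h :=
          Finset.sum_add_sum_compl S _
        linarith
      calc |x i| = |∑ j ∈ Sᶜ, h j * x j| := by rw [hxi, abs_neg]
        _ ≤ ∑ j ∈ Sᶜ, |h j * x j| := Finset.abs_sum_le_sum_abs _ _
        _ ≤ ∑ j ∈ Sᶜ, |h j| * C := by
            refine Finset.sum_le_sum fun j hj => ?_
            rw [abs_mul]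
            exact mul_le_mul_of_nonneg_left (hbd j (Finset.mem_compl.mp hj)) (abs_nonneg _)
        _ = (∑ j ∈ Sᶜ, |h j|) * C := (Finset.sum_mul _ _ _).symm
        _ ≤ 1 * C := mul_le_mul_of_nonneg_right hl1 hC
        _ = C := one_mul C
    · exact hbd i hi
  -- the restriction map
  set Φ : (Vsub f) →ₗ[ℝ] (Fin n → ℝ) :=
    { toFun := fun x j => (x : Fin N → ℝ) (g j)
      map_add' := fun a b => rfl
      map_smul' := fun c a => rfl } with hΦ
  -- Φ preserves the norm
  have hnorm : ∀ x : Vsub f, ‖Φ x‖ = ‖x‖ := by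
    intro x
    refine le_antisymm ?_ ?_
    · rw [pi_norm_le_iff_of_nonneg (norm_nonneg x)]
      intro j
      exact norm_le_pi_norm (x : Fin N → ℝ) (g j)
    · show ‖(x : Fin N → ℝ)‖ ≤ ‖Φ x‖
      rw [pi_norm_le_iff_of_nonneg (norm_nonneg (Φ x))]
      intro i
      rw [Real.norm_eq_abs]
      refine key x x.2 ‖Φ x‖ (norm_nonneg _) ?_ i
      intro i' hi'
      have hi'' : i' ∈ Sᶜ := Finset.mem_compl.mpr hi'
      have : (x : Fin N → ℝ) i' = Φ x (g.symm ⟨i', hi''⟩) := by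
        show _ = (x : Fin N → ℝ) (↑(g (g.symm ⟨i', hi''⟩)))
        rw [g.apply_symm_apply]
      rw [this, ← Real.norm_eq_abs]
      exact norm_le_pi_norm (Φ x) _
  -- Φ is injective
  have hinj : Function.Injective Φ := by
    intro a b hab
    have : ‖Φ (a - b)‖ = ‖a - b‖ := hnorm _
    rw [map_sub, hab, sub_self, norm_zero] at this
    exact sub_eq_zero.mp (norm_eq_zero.mp this.symm)
  -- V is the kernel of a linear map into ℝ^m, hence has dimension ≥ n
  have hker : LinearMap.ker (Matrix.mulVecLin (Matrix.of fun j i => f j i)) = Vsub f := by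
    ext x
    constructor
    · intro hx j
      have := congrFun (LinearMap.mem_ker.mp hx) j
      simpa [Matrix.mulVec, dotProduct] using this
    · intro hx
      rw [LinearMap.mem_ker]
      funext j
      simpa [Matrix.mulVec, dotProduct] using hx j
  have hrank : Module.finrank ℝ (Vsub f) = n := by
    have h1 := LinearMap.finrank_range_add_finrank_ker
      (Matrix.mulVecLin (Matrix.of fun j i => f j i) : (Fin N → ℝ) →ₗ[ℝ] (Fin m → ℝ))
    rw [hker] at h1
    have h2 : Module.finrank ℝ (LinearMap.range
        (Matrix.mulVecLin (Matrix.of fun j i => f j i) : (Fin N → ℝ) →ₗ[ℝ] (Fin m → ℝ))) ≤ m := by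
      have := Submodule.finrank_le (LinearMap.range
        (Matrix.mulVecLin (Matrix.of fun j i => f j i) : (Fin N → ℝ) →ₗ[ℝ] (Fin m → ℝ)))
      simpa [Module.finrank_fintype_fun_eq_card] using this
    rw [Module.finrank_fintype_fun_eq_card, Fintype.card_fin] at h1
    have h3 : Module.finrank ℝ (Vsub f) ≤ n := by
      have := LinearMap.finrank_le_finrank_of_injective hinj
      simpa [Module.finrank_fintype_fun_eq_card] using this
    omega
  have hsurj : Function.Surjective Φ := by
    have heq : Module.finrank ℝ (Vsub f) = Module.finrank ℝ (Fin n → ℝ) := by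
      rw [hrank, Module.finrank_fintype_fun_eq_card, Fintype.card_fin]
    exact (LinearMap.injective_iff_surjective_of_finrank_eq_finrank heq).mp hinj
  exact ⟨{ LinearEquiv.ofBijective Φ ⟨hinj, hsurj⟩ with norm_map' := hnorm }⟩

end
end

section
/- Let V be an n-dimensional subspace of ℓ∞^N written as V = {x ∈ ℝ^N : ⟨f^1,x⟩ = ⋯ = ⟨f^m,x⟩ = 0}, N = n + m, for linearly independent f^1,…,f^m. If there exists a projection P from ℓ∞^N onto V with operator norm ‖P‖ = 1, then there exists an index set S ⊆ {1,…,N} of size m with det(F_S) ≠ 0 such that ‖h(S)^k‖₁ ≤ 2 for all k ∈ S. -/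
open Matrix Finset

noncomputable section

open Equiv

/-! ### Auxiliary lemmas -/

section Aux

/-- strictly row diagonally dominant real matrix has nonzero det -/
lemma aux_sdd_det_ne_zero {r : ℕ} (D : Matrix (Fin r) (Fin r) ℝ)
    (h : ∀ i, ∑ j ∈ univ.erase i, |D i j| < D i i) : D.det ≠ 0 := by
  intro hdet
  obtain ⟨v, hv0, hv⟩ := (Matrix.exists_mulVec_eq_zero_iff).2 hdet
  have hrne : (univ : Finset (Fin r)).Nonempty := by
    rcases Nat.eq_zero_or_pos r with h0 | h0
    · exfalso; apply hv0; funext i; exact absurd i.2 (by omega)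
    · exact ⟨⟨0, h0⟩, mem_univ _⟩
  obtain ⟨i, -, hi⟩ := Finset.exists_max_image univ (fun i => |v i|) hrne
  have hvi : 0 < |v i| := by
    rcases eq_or_ne (v i) 0 with h' | h'
    · exfalso; apply hv0; funext j
      have h1 : |v j| ≤ |v i| := hi j (mem_univ j)
      rw [h', abs_zero] at h1
      have h2 : |v j| = 0 := le_antisymm h1 (abs_nonneg _)
      simpa using abs_eq_zero.1 h2
    · exact abs_pos.2 h'
  have hrow := congrFun hv i
  have heq : D i i * v i = -∑ j ∈ univ.erase i, D i j * v j := by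
    have h0 : ∑ j, D i j * v j = 0 := hrow
    rw [← Finset.add_sum_erase _ _ (mem_univ i)] at h0
    linarith
  have hb : |D i i * v i| ≤ (∑ j ∈ univ.erase i, |D i j|) * |v i| := by
    rw [heq, abs_neg]
    calc |∑ j ∈ univ.erase i, D i j * v j| ≤ ∑ j ∈ univ.erase i, |D i j * v j| :=
          Finset.abs_sum_le_sum_abs _ _
      _ ≤ ∑ j ∈ univ.erase i, |D i j| * |v i| := by
          apply Finset.sum_le_sum
          intro j _
          rw [abs_mul]
          exact mul_le_mul_of_nonneg_left (hi j (mem_univ j)) (abs_nonneg _)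
      _ = _ := by rw [← Finset.sum_mul]
  have hDii : 0 < D i i := lt_of_le_of_lt (Finset.sum_nonneg fun j _ => abs_nonneg _) (h i)
  rw [abs_mul, abs_of_pos hDii] at hb
  nlinarith [h i, hvi]

lemma aux_sdd_det_pos {r : ℕ} (D : Matrix (Fin r) (Fin r) ℝ)
    (h : ∀ i, ∑ j ∈ univ.erase i, |D i j| < D i i) : 0 < D.det := by
  set g : ℝ → ℝ := fun t => (Matrix.of fun i j => if i = j then D i j else t * D i j).det with hg
  have hgc : Continuous g := by
    apply Continuous.matrix_det
    apply continuous_matrix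
    intro i j
    by_cases hij : i = j
    · simp only [Matrix.of_apply, if_pos hij]; fun_prop
    · simp only [Matrix.of_apply, if_neg hij]; fun_prop
  have hne : ∀ t ∈ Set.Icc (0:ℝ) 1, g t ≠ 0 := by
    intro t ht
    apply aux_sdd_det_ne_zero
    intro i
    have hdg : (Matrix.of fun i j => if i = j then D i j else t * D i j) i i = D i i := by simp
    rw [hdg]
    refine lt_of_le_of_lt ?_ (h i)
    apply Finset.sum_le_sum
    intro j hj
    have hij : i ≠ j := fun h' => (Finset.mem_erase.1 hj).1 h'.symm
    simp only [Matrix.of_apply, if_neg hij]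
    rw [abs_mul]
    calc |t| * |D i j| ≤ 1 * |D i j| := by
          apply mul_le_mul_of_nonneg_right _ (abs_nonneg _)
          rw [abs_of_nonneg ht.1]; exact ht.2
      _ = |D i j| := one_mul _
  have hg0 : 0 < g 0 := by
    have h1 : g 0 = ∏ i, D i i := by
      show (Matrix.of fun i j => if i = j then D i j else (0:ℝ) * D i j).det = _
      have h2 : (Matrix.of fun i j => if i = j then D i j else (0:ℝ) * D i j) =
          Matrix.diagonal (fun i => D i i) := by
        ext i j
        by_cases hij : i = j <;> simp [Matrix.diagonal, hij]
      rw [h2, Matrix.det_diagonal]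
    rw [h1]
    apply Finset.prod_pos
    intro i _
    exact lt_of_le_of_lt (Finset.sum_nonneg fun j _ => abs_nonneg _) (h i)
  have hg1 : g 1 = D.det := by
    show (Matrix.of fun i j => if i = j then D i j else (1:ℝ) * D i j).det = _
    congr 1
    ext i j
    by_cases hij : i = j <;> simp [hij]
  by_contra hle
  push_neg at hle
  rw [← hg1] at hle
  have h0 : g 1 ≠ 0 := hne 1 (by norm_num)
  have hlt : g 1 < 0 := lt_of_le_of_ne hle h0
  have hiv := intermediate_value_Icc' (by norm_num : (0:ℝ) ≤ 1) hgc.continuousOn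
  have hmem : (0:ℝ) ∈ Set.Icc (g 1) (g 0) := ⟨le_of_lt hlt, le_of_lt hg0⟩
  obtain ⟨t, ht, hgt⟩ := hiv hmem
  exact hne t ht hgt

lemma aux_wdd_det_nonneg {r : ℕ} (D : Matrix (Fin r) (Fin r) ℝ)
    (h : ∀ i, ∑ j ∈ univ.erase i, |D i j| ≤ D i i) : 0 ≤ D.det := by
  have key : ∀ ε > (0:ℝ), 0 < (D + ε • (1 : Matrix (Fin r) (Fin r) ℝ)).det := by
    intro ε hε
    apply aux_sdd_det_pos
    intro i
    have h1 : ∀ j ∈ univ.erase i, |(D + ε • (1:Matrix (Fin r) (Fin r) ℝ)) i j| = |D i j| := by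
      intro j hj
      have hij : i ≠ j := fun h' => (Finset.mem_erase.1 hj).1 h'.symm
      simp [Matrix.one_apply, hij]
    rw [Finset.sum_congr rfl h1]
    have h2 : (D + ε • (1:Matrix (Fin r) (Fin r) ℝ)) i i = D i i + ε := by
      simp [Matrix.one_apply]
    rw [h2]
    linarith [h i]
  have hc : ContinuousAt (fun ε : ℝ => (D + ε • (1 : Matrix (Fin r) (Fin r) ℝ)).det) 0 := by
    apply Continuous.continuousAt
    apply Continuous.matrix_det
    apply continuous_matrix
    intro i j
    simp only [Matrix.add_apply, Matrix.smul_apply, smul_eq_mul]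
    fun_prop
  have htend : Filter.Tendsto (fun ε : ℝ => (D + ε • (1 : Matrix (Fin r) (Fin r) ℝ)).det)
      (nhdsWithin 0 (Set.Ioi 0)) (nhds (D.det)) := by
    have h3 : (D + (0:ℝ) • (1 : Matrix (Fin r) (Fin r) ℝ)).det = D.det := by simp
    rw [← h3]
    exact hc.continuousWithinAt.tendsto
  apply ge_of_tendsto htend
  filter_upwards [self_mem_nhdsWithin] with ε hε
  exact le_of_lt (key ε hε)

lemma aux_det_mul_expand {m N : ℕ} (A : Matrix (Fin m) (Fin N) ℝ) (B : Matrix (Fin N) (Fin m) ℝ) :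
    (A * B).det = ∑ d : Fin m → Fin N, (∏ i, A i (d i)) * (B.submatrix d id).det := by
  have hAB : (A * B) = Matrix.of (fun i => ∑ j, A i j • B j) := by
    ext i j'
    simp [Matrix.mul_apply, Finset.sum_apply]
  have h1 : (A * B).det =
      (Matrix.detRowAlternating : (Fin m → ℝ) [⋀^Fin m]→ₗ[ℝ] ℝ).toMultilinearMap
        (fun i => ∑ j, A i j • B j) := by
    rw [hAB]; rfl
  rw [h1, MultilinearMap.map_sum]
  congr 1
  funext d
  rw [MultilinearMap.map_smul_univ]
  simp only [smul_eq_mul]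
  congr 1

lemma aux_image_emb_comp {m N : ℕ} (S : Finset (Fin N)) (hS : S.card = m) (σ : Perm (Fin m)) :
    Finset.image (fun x => ((S.orderIsoOfFin hS) (σ x) : Fin N)) univ = S := by
  apply Finset.Subset.antisymm
  · intro y hy
    simp only [Finset.mem_image] at hy
    obtain ⟨x, -, rfl⟩ := hy
    exact Finset.coe_mem _
  · intro y hy
    simp only [Finset.mem_image]
    exact ⟨σ.symm ((S.orderIsoOfFin hS).symm ⟨y, hy⟩), mem_univ _, by simp⟩

/-- Cauchy–Binet formula. -/
lemma aux_cauchy_binet {m N : ℕ} (A : Matrix (Fin m) (Fin N) ℝ) (B : Matrix (Fin N) (Fin m) ℝ) :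
    (A * B).det = ∑ S : {S : Finset (Fin N) // S.card = m},
      (A.submatrix id (fun i => ((S.1.orderIsoOfFin S.2) i : Fin N))).det *
      (B.submatrix (fun i => ((S.1.orderIsoOfFin S.2) i : Fin N)) id).det := by
  rw [aux_det_mul_expand]
  rw [← Finset.sum_filter_add_sum_filter_not Finset.univ (fun d => Function.Injective d)]
  have hzero : ∑ d ∈ univ.filter (fun d : Fin m → Fin N => ¬ Function.Injective d),
      (∏ i, A i (d i)) * (B.submatrix d id).det = 0 := by
    apply Finset.sum_eq_zero
    intro d hd
    simp only [Finset.mem_filter, Function.Injective, not_forall] at hd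
    obtain ⟨i, j, hij, hne⟩ := hd.2
    have hz : (B.submatrix d id).det = 0 := by
      apply Matrix.det_zero_of_row_eq hne
      funext l
      simp [Matrix.submatrix_apply, hij]
    rw [hz, mul_zero]
  rw [hzero, add_zero]
  have hbij : ∑ p : {S : Finset (Fin N) // S.card = m} × Perm (Fin m),
      (∏ i, A i ((p.1.1.orderIsoOfFin p.1.2) (p.2 i) : Fin N)) *
        (B.submatrix (fun i => ((p.1.1.orderIsoOfFin p.1.2) (p.2 i) : Fin N)) id).det
      = ∑ d ∈ univ.filter (fun d : Fin m → Fin N => Function.Injective d),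
      (∏ i, A i (d i)) * (B.submatrix d id).det := by
    apply Finset.sum_bij
      (i := fun p _ => (fun i => ((p.1.1.orderIsoOfFin p.1.2) (p.2 i) : Fin N)))
    · intro p _
      simp only [Finset.mem_filter, Finset.mem_univ, true_and]
      intro x y hxy
      have h1 : (p.1.1.orderIsoOfFin p.1.2) (p.2 x) = (p.1.1.orderIsoOfFin p.1.2) (p.2 y) :=
        Subtype.ext hxy
      exact p.2.injective ((p.1.1.orderIsoOfFin p.1.2).injective h1)
    · intro p hp q hq heq
      have hSS : p.1.1 = q.1.1 := by
        rw [← aux_image_emb_comp p.1.1 p.1.2 p.2, ← aux_image_emb_comp q.1.1 q.1.2 q.2]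
        rw [heq]
      obtain ⟨⟨S, hScard⟩, σ⟩ := p
      obtain ⟨⟨S', hScard'⟩, σ'⟩ := q
      simp only at hSS
      subst hSS
      simp only [Prod.mk.injEq, Subtype.mk.injEq, true_and]
      apply Equiv.ext
      intro x
      have := congrFun heq x
      exact (S.orderIsoOfFin hScard).injective (Subtype.ext this)
    · intro d hd
      simp only [Finset.mem_filter, Finset.mem_univ, true_and] at hd
      have hcard : (Finset.image d univ).card = m := by
        rw [Finset.card_image_of_injective _ hd, Finset.card_univ, Fintype.card_fin]
      have hmem : ∀ x, d x ∈ Finset.image d univ := fun x =>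
        Finset.mem_image_of_mem d (mem_univ x)
      set S : Finset (Fin N) := Finset.image d univ with hSdef
      have hbijf : Function.Bijective
          (fun x => ((S.orderIsoOfFin hcard).symm ⟨d x, hmem x⟩ : Fin m)) := by
        rw [Fintype.bijective_iff_injective_and_card]
        refine ⟨?_, rfl⟩
        intro x y hxy
        have h2 : (⟨d x, hmem x⟩ : S) = ⟨d y, hmem y⟩ :=
          (S.orderIsoOfFin hcard).symm.injective hxy
        exact hd (congrArg Subtype.val h2)
      refine ⟨(⟨S, hcard⟩, (Equiv.ofBijective _ hbijf)), mem_univ _, ?_⟩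
      funext x
      simp only [Equiv.ofBijective_apply]
      rw [OrderIso.apply_symm_apply]
    · intro p hp
      rfl
  rw [← hbij, Fintype.sum_prod_type]
  congr 1
  funext S
  have hinner : ∀ σ : Perm (Fin m),
      (∏ i, A i ((S.1.orderIsoOfFin S.2) (σ i) : Fin N)) *
        (B.submatrix (fun i => ((S.1.orderIsoOfFin S.2) (σ i) : Fin N)) id).det
      = (Perm.sign σ : ℝ) * ((∏ i, (A.submatrix id (fun i => ((S.1.orderIsoOfFin S.2) i : Fin N))) i (σ i)) *
          (B.submatrix (fun i => ((S.1.orderIsoOfFin S.2) i : Fin N)) id).det) := by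
    intro σ
    have hsub : (B.submatrix (fun i => ((S.1.orderIsoOfFin S.2) (σ i) : Fin N)) id)
        = (B.submatrix (fun i => ((S.1.orderIsoOfFin S.2) i : Fin N)) id).submatrix σ id := by
      ext i j
      simp [Matrix.submatrix_apply]
    rw [hsub, Matrix.det_permute]
    simp only [Matrix.submatrix_apply, id_eq]
    ring
  rw [Finset.sum_congr rfl (fun σ _ => hinner σ)]
  have hdet : (A.submatrix id (fun i => ((S.1.orderIsoOfFin S.2) i : Fin N))).det
      = ∑ σ : Perm (Fin m), (Perm.sign σ : ℝ) *
          ∏ i, (A.submatrix id (fun i => ((S.1.orderIsoOfFin S.2) i : Fin N))) i (σ i) := by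
    rw [← Matrix.det_transpose, Matrix.det_apply']
    rfl
  rw [hdet, Finset.sum_mul]
  congr 1
  funext σ
  ring

/-- determinant is additive over a sum in a fixed column -/
lemma aux_det_updateCol_sum {r : ℕ} {α : Type*} (M : Matrix (Fin r) (Fin r) ℝ) (c : Fin r)
    (t : Finset α) (w : α → Fin r → ℝ) :
    (M.updateCol c (fun k => ∑ i ∈ t, w i k)).det = ∑ i ∈ t, (M.updateCol c (w i)).det := by
  classical
  induction t using Finset.induction_on with
  | empty =>
      simp only [Finset.sum_empty]
      apply Matrix.det_eq_zero_of_column_eq_zero c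
      intro i
      simp [Matrix.updateCol_apply]
  | insert a s hnotmem ih =>
      have h1 : (fun k => ∑ i ∈ insert a s, w i k) = (w a) + (fun k => ∑ i ∈ s, w i k) := by
        funext k
        simp [Finset.sum_insert hnotmem]
      rw [h1, Matrix.det_updateCol_add, ih, Finset.sum_insert hnotmem]

/-- The key estimate: for a diagonally dominant `Q`, the sum of the absolute values of
the determinants obtained by replacing column `c` of `Q_SS` with outside columns is at most
`det Q_SS`. -/
lemma aux_key_ineq {N m : ℕ} (Q : Matrix (Fin N) (Fin N) ℝ) (S : Finset (Fin N))
    (em : Fin m → Fin N) (hinj : Function.Injective em)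
    (him : Finset.image em Finset.univ = S)
    (hdom : ∀ a, ∑ b ∈ Finset.univ.erase a, |Q a b| ≤ Q a a) (c : Fin m) :
    ∑ i ∈ Sᶜ, |((Q.submatrix em em).updateCol c (fun k' => Q (em k') i)).det|
      ≤ (Q.submatrix em em).det := by
  classical
  set QS := Q.submatrix em em with hQS
  have hmemS : ∀ j, em j ∈ S := by
    intro j
    rw [← him]
    exact Finset.mem_image_of_mem em (mem_univ j)
  have hero : ∀ (k' : Fin m) (g : Fin N → ℝ),
      ∑ j ∈ univ.erase k', g (em j) = ∑ b ∈ S.erase (em k'), g b := by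
    intro k' g
    rw [← him, ← Finset.image_erase hinj]
    rw [Finset.sum_image (fun x _ y _ h => hinj h)]
  have hero2 : ∀ (k' c' : Fin m) (g : Fin N → ℝ),
      ∑ j ∈ (univ.erase k').erase c', g (em j) = ∑ b ∈ (S.erase (em k')).erase (em c'), g b := by
    intro k' c' g
    rw [← him, ← Finset.image_erase hinj, ← Finset.image_erase hinj]
    rw [Finset.sum_image (fun x _ y _ h => hinj h)]
  -- split dominance
  have hsplit : ∀ a ∈ S, (∑ b ∈ S.erase a, |Q a b|) + ∑ i ∈ Sᶜ, |Q a i| ≤ Q a a := by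
    intro a ha
    have hdisj : Disjoint (S.erase a) Sᶜ := by
      rw [Finset.disjoint_left]
      intro b hb hbc
      exact (Finset.mem_compl.1 hbc) (Finset.mem_of_mem_erase hb)
    have hsub : (S.erase a) ∪ Sᶜ ⊆ univ.erase a := by
      intro b hb
      rcases Finset.mem_union.1 hb with hb | hb
      · exact Finset.mem_erase.2 ⟨(Finset.mem_erase.1 hb).1, mem_univ b⟩
      · refine Finset.mem_erase.2 ⟨?_, mem_univ b⟩
        intro hba
        exact (Finset.mem_compl.1 hb) (hba ▸ ha)
    calc (∑ b ∈ S.erase a, |Q a b|) + ∑ i ∈ Sᶜ, |Q a i|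
        = ∑ b ∈ (S.erase a) ∪ Sᶜ, |Q a b| := (Finset.sum_union hdisj).symm
      _ ≤ ∑ b ∈ univ.erase a, |Q a b| :=
          Finset.sum_le_sum_of_subset_of_nonneg hsub (fun _ _ _ => abs_nonneg _)
      _ ≤ Q a a := hdom a
  set Ud : Fin N → ℝ := fun i => ((QS.updateCol c (fun k' => Q (em k') i)).det) with hUd
  set ε : Fin N → ℝ := fun i => if 0 ≤ Ud i then 1 else -1 with hε
  set v : Fin m → ℝ := fun k' => ∑ i ∈ Sᶜ, ε i * Q (em k') i with hv
  have habs : ∀ k', |v k'| ≤ ∑ i ∈ Sᶜ, |Q (em k') i| := by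
    intro k'
    calc |v k'| ≤ ∑ i ∈ Sᶜ, |ε i * Q (em k') i| := Finset.abs_sum_le_sum_abs _ _
      _ = ∑ i ∈ Sᶜ, |Q (em k') i| := by
          apply Finset.sum_congr rfl
          intro i _
          rw [abs_mul]
          have : |ε i| = 1 := by
            rw [hε]
            by_cases h : 0 ≤ Ud i <;> simp [h]
          rw [this, one_mul]
  -- the sum identity
  have hsumv : (QS.updateCol c v).det = ∑ i ∈ Sᶜ, |Ud i| := by
    rw [hv]
    have hv' : (fun k' => ∑ i ∈ Sᶜ, ε i * Q (em k') i)
        = (fun k' => ∑ i ∈ Sᶜ, (fun i k' => ε i * Q (em k') i) i k') := rfl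
    rw [hv', aux_det_updateCol_sum]
    apply Finset.sum_congr rfl
    intro i _
    have h1 : (fun k' => ε i * Q (em k') i) = ε i • (fun k' => Q (em k') i) := rfl
    rw [h1, Matrix.det_updateCol_smul]
    rw [hε]
    by_cases h : 0 ≤ Ud i
    · simp only [if_pos h, smul_eq_mul, one_mul]
      rw [abs_of_nonneg h]
    · simp only [if_neg h, smul_eq_mul, neg_one_mul]
      push_neg at h
      rw [abs_of_neg h]
  -- dominance of the perturbed matrix
  have hD : 0 ≤ (QS.updateCol c (fun k' => QS k' c - v k')).det := by
    apply aux_wdd_det_nonneg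
    intro k'
    by_cases hkc : k' = c
    · -- diagonal row
      have hdd : (QS.updateCol c fun k'' => QS k'' c - v k'') k' k' = QS k' c - v k' := by
        rw [Matrix.updateCol_apply, if_pos hkc]
      rw [hdd]
      have hrow : ∀ j ∈ univ.erase k',
          |(QS.updateCol c fun k'' => QS k'' c - v k'') k' j| = |Q (em k') (em j)| := by
        intro j hj
        have hjc : j ≠ c := fun h => (Finset.mem_erase.1 hj).1 (h.trans hkc.symm)
        rw [Matrix.updateCol_apply, if_neg hjc]
        rfl
      rw [Finset.sum_congr rfl hrow, hero k' (fun b => |Q (em k') b|)]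
      have h2 := hsplit (em k') (hmemS k')
      have h3 := habs k'
      have h4 : QS k' c = Q (em k') (em k') := by
        show Q (em k') (em c) = _
        rw [← hkc]
      rw [h4]
      linarith [le_abs_self (v k')]
    · -- off-diagonal row
      have hcmem : c ∈ univ.erase k' := Finset.mem_erase.2 ⟨fun h => hkc h.symm, mem_univ c⟩
      rw [← Finset.add_sum_erase _ _ hcmem]
      have hdd : (QS.updateCol c fun k'' => QS k'' c - v k'') k' k' = QS k' k' := by
        rw [Matrix.updateCol_apply, if_neg hkc]
      have hdc : (QS.updateCol c fun k'' => QS k'' c - v k'') k' c = QS k' c - v k' := by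
        rw [Matrix.updateCol_apply, if_pos rfl]
      have hrow : ∀ j ∈ (univ.erase k').erase c,
          |(QS.updateCol c fun k'' => QS k'' c - v k'') k' j| = |Q (em k') (em j)| := by
        intro j hj
        rw [Matrix.updateCol_apply, if_neg (Finset.mem_erase.1 hj).1]
        rfl
      rw [hdd, hdc, Finset.sum_congr rfl hrow, hero2 k' c (fun b => |Q (em k') b|)]
      have hkmem : em c ∈ S.erase (em k') := by
        refine Finset.mem_erase.2 ⟨?_, hmemS c⟩
        intro h
        exact hkc (hinj h).symm
      have hre := Finset.add_sum_erase _ (fun b => |Q (em k') b|) hkmem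
      have h2 := hsplit (em k') (hmemS k')
      have h3 := habs k'
      have htri : |QS k' c - v k'| ≤ |Q (em k') (em c)| + |v k'| := by
        have h5 : QS k' c = Q (em k') (em c) := rfl
        rw [h5, sub_eq_add_neg]
        calc |Q (em k') (em c) + -v k'| ≤ |Q (em k') (em c)| + |-v k'| := abs_add_le _ _
          _ = |Q (em k') (em c)| + |v k'| := by rw [abs_neg]
      have hQkk : QS k' k' = Q (em k') (em k') := rfl
      rw [hQkk]
      linarith
  -- conclusion
  have hminus : (QS.updateCol c (fun k' => QS k' c - v k')).det
      = QS.det - (QS.updateCol c v).det := by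
    have h1 : (fun k' => QS k' c - v k') = (fun k' => QS k' c) + (-v) := by
      funext k'
      simp [sub_eq_add_neg]
    rw [h1, Matrix.det_updateCol_add]
    have h2 : QS.updateCol c (fun k' => QS k' c) = QS := Matrix.updateCol_eq_self QS c
    have h3 : (-v) = (-1 : ℝ) • v := by funext k'; simp
    rw [h2, h3, Matrix.det_updateCol_smul]
    ring
  rw [hminus] at hD
  rw [← hsumv]
  linarith

end Aux

theorem exists_good_index_set_of_norm_one_projection
    {N n m : ℕ} (hN : N = n + m) (f : Fin m → Fin N → ℝ)
    (hf : LinearIndependent ℝ f)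
    (P : (Fin N → ℝ) →L[ℝ] (Fin N → ℝ)) (hP : IsProjOnto (Vsub f) P) (hPnorm : ‖P‖ = 1) :
    ∃ (S : Finset (Fin N)) (hS : S.card = m),
      (rowSub (colMat f) S hS).det ≠ 0 ∧
      ∀ (k : Fin N) (hk : k ∈ S), l1norm (hVec (colMat f) S hS k hk) ≤ 2 := by
  classical
  set F : Matrix (Fin N) (Fin m) ℝ := colMat f with hFdef
  set A : Matrix (Fin m) (Fin N) ℝ := Fᵀ with hAdef
  set Mm : Matrix (Fin N) (Fin N) ℝ :=
    LinearMap.toMatrix' (P : (Fin N → ℝ) →ₗ[ℝ] (Fin N → ℝ)) with hMmdef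
  set Q : Matrix (Fin N) (Fin N) ℝ := 1 - Mm with hQdef
  have hMapp : ∀ x, Mm.mulVec x = P x := by
    intro x
    rw [← Matrix.toLin'_apply, hMmdef, Matrix.toLin'_toMatrix']
    rfl
  have hQapp : ∀ x : Fin N → ℝ, Q.mulVec x = x - P x := by
    intro x
    rw [hQdef, Matrix.sub_mulVec, Matrix.one_mulVec, hMapp]
  -- row sums of Mm are at most 1
  have hrowM : ∀ i, ∑ j, |Mm i j| ≤ 1 := by
    intro i
    set x : Fin N → ℝ := fun j => if 0 ≤ Mm i j then 1 else -1 with hx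
    have hxnorm : ‖x‖ ≤ 1 := by
      rw [pi_norm_le_iff_of_nonneg zero_le_one]
      intro j
      rw [hx]
      by_cases h : 0 ≤ Mm i j <;> simp [h]
    have h1 : P x i = ∑ j, |Mm i j| := by
      rw [← hMapp x]
      show ∑ j, Mm i j * x j = _
      apply Finset.sum_congr rfl
      intro j _
      by_cases h : 0 ≤ Mm i j
      · simp only [hx, if_pos h, mul_one, abs_of_nonneg h]
      · push_neg at h
        simp only [hx, if_neg (not_le.2 h), abs_of_neg h]
        ring
    calc ∑ j, |Mm i j| = P x i := h1.symm
      _ ≤ |P x i| := le_abs_self _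
      _ ≤ ‖P x‖ := by
          rw [← Real.norm_eq_abs]
          exact norm_le_pi_norm (P x) i
      _ ≤ ‖P‖ * ‖x‖ := P.le_opNorm x
      _ ≤ 1 := by rw [hPnorm, one_mul]; exact hxnorm
  -- diagonal dominance of Q
  have hdom : ∀ a : Fin N, ∑ b ∈ univ.erase a, |Q a b| ≤ Q a a := by
    intro a
    have h1 : ∑ j, |Mm a j| = |Mm a a| + ∑ j ∈ univ.erase a, |Mm a j| :=
      (Finset.add_sum_erase _ _ (mem_univ a)).symm
    have h2 : ∀ j ∈ univ.erase a, |Q a j| = |Mm a j| := by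
      intro j hj
      have hja : a ≠ j := fun h => (Finset.mem_erase.1 hj).1 h.symm
      rw [hQdef]
      simp [Matrix.one_apply, hja]
    have h3 : Q a a = 1 - Mm a a := by
      rw [hQdef]; simp [Matrix.one_apply]
    rw [Finset.sum_congr rfl h2, h3]
    have h4 := hrowM a
    rw [h1] at h4
    have h5 : Mm a a ≤ |Mm a a| := le_abs_self _
    linarith
  -- V membership
  have hVmem : ∀ x : Fin N → ℝ, x ∈ Vsub f ↔ A.mulVec x = 0 := by
    intro x
    have hmem : x ∈ Vsub f ↔ ∀ j, ∑ i, f j i * x i = 0 := Iff.rfl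
    rw [hmem]
    constructor
    · intro h
      funext j
      show ∑ i, A j i * x i = 0
      rw [← h j]
      apply Finset.sum_congr rfl
      intro i _
      rfl
    · intro h j
      have h0 : ∑ i, A j i * x i = 0 := by
        have h1 := congrFun h j
        simpa [Matrix.mulVec, dotProduct] using h1
      rw [← h0]
      apply Finset.sum_congr rfl
      intro i _
      rfl
  have hQV : ∀ x : Fin N → ℝ, A.mulVec x = 0 → Q.mulVec x = 0 := by
    intro x hx
    rw [hQapp, hP.2 x ((hVmem x).2 hx), sub_self]
  -- A * Mm = 0 and A * Q = A
  have hAM : A * Mm = 0 := by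
    ext a b
    have hcol : (fun l => Mm l b) = Mm.mulVec (Pi.single b 1) := by
      rw [Matrix.mulVec_single_one]
      rfl
    have hPV : P (Pi.single b 1) ∈ Vsub f := by
      rw [← hP.1]
      exact LinearMap.mem_range_self _ _
    have h2 : A.mulVec (fun l => Mm l b) = 0 := by
      rw [hcol, hMapp]
      exact (hVmem _).1 hPV
    have h3 : (A * Mm) a b = A.mulVec (fun l => Mm l b) a := by
      rw [Matrix.mul_apply]
      rfl
    rw [h3, h2]
    rfl
  have hAQ : A * Q = A := by
    rw [hQdef, Matrix.mul_sub, Matrix.mul_one, hAM, sub_zero]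
  -- a right inverse of A
  obtain ⟨R, hAR⟩ : ∃ R : Matrix (Fin N) (Fin m) ℝ, A * R = 1 := by
    set W : Matrix (Fin m) (Fin m) ℝ := A * F with hW
    have hFinj : ∀ cvec : Fin m → ℝ, F.mulVec cvec = 0 → cvec = 0 := by
      intro cvec hc
      have hs : ∑ j, cvec j • f j = 0 := by
        funext l
        have h2 : ∑ j, F l j * cvec j = 0 := congrFun hc l
        rw [Finset.sum_apply, Pi.zero_apply]
        rw [← h2]
        apply Finset.sum_congr rfl
        intro j _
        show cvec j * f j l = F l j * cvec j
        rw [mul_comm]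
        rfl
      funext j
      rw [Pi.zero_apply]
      exact Fintype.linearIndependent_iff.1 hf cvec hs j
    have hWc : ∀ cvec : Fin m → ℝ, W.mulVec cvec = 0 → cvec = 0 := by
      intro cvec hc
      apply hFinj
      have h1 : F.mulVec cvec ⬝ᵥ F.mulVec cvec = 0 := by
        have h2 : cvec ⬝ᵥ W.mulVec cvec = 0 := by rw [hc, dotProduct_zero]
        rw [hW, ← Matrix.mulVec_mulVec, dotProduct_mulVec, Matrix.vecMul_transpose] at h2
        exact h2
      exact dotProduct_self_eq_zero.1 h1
    have hWinj : Function.Injective W.mulVecLin := by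
      intro x y hxy
      have h1 : W.mulVec (x - y) = 0 := by
        rw [Matrix.mulVec_sub]
        rw [show W.mulVec x = W.mulVecLin x from rfl, show W.mulVec y = W.mulVecLin y from rfl]
        rw [hxy, sub_self]
      have := hWc _ h1
      exact sub_eq_zero.1 this
    have hWsurj : Function.Surjective W.mulVecLin :=
      LinearMap.injective_iff_surjective.1 hWinj
    choose w hw using fun j => hWsurj (Pi.single j 1)
    refine ⟨F * (Matrix.of fun i j => w j i), ?_⟩
    rw [← Matrix.mul_assoc]
    ext a b
    have h1 : (W * (Matrix.of fun i j => w j i)) a b = W.mulVec (w b) a := by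
      rw [Matrix.mul_apply]
      rfl
    rw [show A * F = W from rfl] at *
    rw [h1, show W.mulVec (w b) = W.mulVecLin (w b) from rfl, hw b]
    rw [Matrix.one_apply, Pi.single_apply]
  set G : Matrix (Fin N) (Fin m) ℝ := Q * R with hGdef
  have hAG : A * G = 1 := by
    rw [hGdef, ← Matrix.mul_assoc, hAQ, hAR]
  have hGA : G * A = Q := by
    have hx : ∀ x : Fin N → ℝ, (G * A).mulVec x = Q.mulVec x := by
      intro x
      set y : Fin N → ℝ := (R * A).mulVec x with hy
      have h1 : (G * A).mulVec x = Q.mulVec y := by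
        rw [hGdef, Matrix.mul_assoc, ← Matrix.mulVec_mulVec]
      have h2 : A.mulVec (y - x) = 0 := by
        rw [Matrix.mulVec_sub, hy, Matrix.mulVec_mulVec, ← Matrix.mul_assoc, hAR,
          Matrix.one_mul, sub_self]
      have h3 : Q.mulVec (y - x) = 0 := hQV _ h2
      rw [Matrix.mulVec_sub] at h3
      rw [h1]
      have := sub_eq_zero.1 h3
      rw [this]
    ext a b
    have h1 : (G * A) a b = (G * A).mulVec (Pi.single b 1) a := by
      rw [Matrix.mulVec_single_one]
      rfl
    have h2 : Q a b = Q.mulVec (Pi.single b 1) a := by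
      rw [Matrix.mulVec_single_one]
      rfl
    rw [h1, h2, hx]
  -- Cauchy-Binet: find a good S
  have hCB := aux_cauchy_binet A G
  rw [hAG, Matrix.det_one] at hCB
  have hsumne : (∑ S : {S : Finset (Fin N) // S.card = m},
      (A.submatrix id (fun i => ((S.1.orderIsoOfFin S.2) i : Fin N))).det *
      (G.submatrix (fun i => ((S.1.orderIsoOfFin S.2) i : Fin N)) id).det) ≠ 0 := by
    rw [← hCB]; norm_num
  obtain ⟨S', -, hS'⟩ := Finset.exists_ne_zero_of_sum_ne_zero hsumne
  set S : Finset (Fin N) := S'.1 with hSdef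
  have hS : S.card = m := S'.2
  set em : Fin m → Fin N := fun i => ((S.orderIsoOfFin hS) i : Fin N) with hemdef
  have hinj : Function.Injective em := by
    intro x y hxy
    exact (S.orderIsoOfFin hS).injective (Subtype.ext hxy)
  have him : Finset.image em univ = S := by
    have h0 := aux_image_emb_comp S hS (Equiv.refl (Fin m))
    exact h0
  -- determinant identities
  have hArows : A.submatrix id em = (rowSub F S hS)ᵀ := by
    ext l j
    rfl
  have hdetA : (A.submatrix id em).det = (rowSub F S hS).det := by
    rw [hArows, Matrix.det_transpose]
  have hdetFne : (rowSub F S hS).det ≠ 0 := by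
    intro h
    apply hS'
    rw [hdetA, h, zero_mul]
  have hdetGne : (G.submatrix em id).det ≠ 0 := by
    intro h
    apply hS'
    rw [h, mul_zero]
  set QS : Matrix (Fin m) (Fin m) ℝ := Q.submatrix em em with hQSdef
  have hQSfact : QS = G.submatrix em id * A.submatrix id em := by
    rw [hQSdef, ← hGA]
    exact Matrix.submatrix_mul G A em id em Function.bijective_id
  have hQSdet : QS.det = (G.submatrix em id).det * (rowSub F S hS).det := by
    rw [hQSfact, Matrix.det_mul, hdetA]
  refine ⟨S, hS, hdetFne, ?_⟩
  intro k hk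
  set c : Fin m := (S.orderIsoOfFin hS).symm ⟨k, hk⟩ with hcdef
  have hemc : em c = k := by
    rw [hemdef, hcdef]
    simp
  -- key inequality
  have hkey := aux_key_ineq Q S em hinj him hdom c
  -- factorization of the modified determinants
  have hfact : ∀ i : Fin N,
      ((QS.updateCol c (fun k' => Q (em k') i)).det)
      = (G.submatrix em id).det * ((rowSub F S hS).updateRow c (fun l => F i l)).det := by
    intro i
    have hBX : QS.updateCol c (fun k' => Q (em k') i)
        = (G.submatrix em id) * ((rowSub F S hS)ᵀ.updateCol c (fun l => F i l)) := by
      ext k' j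
      rw [Matrix.mul_apply]
      by_cases hj : j = c
      · rw [Matrix.updateCol_apply, if_pos hj]
        have h1 : Q (em k') i = (G * A) (em k') i := by rw [hGA]
        rw [h1, Matrix.mul_apply]
        apply Finset.sum_congr rfl
        intro l _
        rw [Matrix.submatrix_apply, Matrix.updateCol_apply, if_pos hj]
        rfl
      · rw [Matrix.updateCol_apply, if_neg hj]
        have h1 : QS k' j = (G * A) (em k') (em j) := by
          rw [hGA]; rfl
        rw [h1, Matrix.mul_apply]
        apply Finset.sum_congr rfl
        intro l _
        rw [Matrix.submatrix_apply, Matrix.updateCol_apply, if_neg hj]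
        rfl
    rw [hBX, Matrix.det_mul]
    congr 1
    rw [Matrix.updateCol_transpose, Matrix.det_transpose]
  -- compute l1norm
  have hval : ∀ i : Fin N, hVec F S hS k hk i
      = ((rowSub F S hS).updateRow c (fun l => F i l)).det / (rowSub F S hS).det := by
    intro i
    rfl
  have hsum_split : l1norm (hVec F S hS k hk)
      = (∑ i ∈ S, |hVec F S hS k hk i|) + ∑ i ∈ Sᶜ, |hVec F S hS k hk i| := by
    rw [l1norm]
    exact (Finset.sum_add_sum_compl S _).symm
  -- the part over S equals 1
  have hpartS : ∑ i ∈ S, |hVec F S hS k hk i| = 1 := by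
    rw [Finset.sum_eq_single_of_mem k hk]
    · rw [hval k]
      have h1 : (fun l => F k l) = rowSub F S hS c := by
        funext l
        show F k l = F ((S.orderIsoOfFin hS) c : Fin N) l
        rw [show ((S.orderIsoOfFin hS) c : Fin N) = em c from rfl, hemc]
      rw [h1, Matrix.updateRow_eq_self, div_self hdetFne, abs_one]
    · intro i hi hik
      rw [hval i]
      set ci : Fin m := (S.orderIsoOfFin hS).symm ⟨i, hi⟩ with hcidef
      have hemci : em ci = i := by
        rw [hemdef, hcidef]; simp
      have hcic : ci ≠ c := by
        intro h
        apply hik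
        rw [← hemci, h, hemc]
      have hzero : ((rowSub F S hS).updateRow c (fun l => F i l)).det = 0 := by
        apply Matrix.det_zero_of_row_eq hcic
        rw [Matrix.updateRow_ne hcic, Matrix.updateRow_self]
        funext l
        show F (em ci) l = F i l
        rw [hemci]
      rw [hzero, zero_div, abs_zero]
  -- the part over the complement is at most 1
  have hpartC : ∑ i ∈ Sᶜ, |hVec F S hS k hk i| ≤ 1 := by
    have h1 : ∀ i ∈ Sᶜ, |hVec F S hS k hk i|
        = |((rowSub F S hS).updateRow c (fun l => F i l)).det| / |(rowSub F S hS).det| := by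
      intro i _
      rw [hval i, abs_div]
    rw [Finset.sum_congr rfl h1, ← Finset.sum_div]
    rw [div_le_one (abs_pos.2 hdetFne)]
    -- reduce to the key inequality
    have h2 : ∀ i ∈ Sᶜ, |((QS.updateCol c (fun k' => Q (em k') i)).det)|
        = |(G.submatrix em id).det| * |((rowSub F S hS).updateRow c (fun l => F i l)).det| := by
      intro i _
      rw [hfact i, abs_mul]
    rw [Finset.sum_congr rfl h2, ← Finset.mul_sum] at hkey
    have h3 : QS.det ≤ |(G.submatrix em id).det| * |(rowSub F S hS).det| := by
      calc QS.det ≤ |QS.det| := le_abs_self _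
        _ = |(G.submatrix em id).det| * |(rowSub F S hS).det| := by
            rw [hQSdet, abs_mul]
    have h4 := le_trans hkey h3
    have h5 : 0 < |(G.submatrix em id).det| := abs_pos.2 hdetGne
    exact le_of_mul_le_mul_left h4 h5
  rw [hsum_split, hpartS]
  linarith

end
end

section
/- Let V be an n-dimensional subspace of ℓ∞^N written as V = {x ∈ ℝ^N : ⟨f^1,x⟩ = ⋯ = ⟨f^m,x⟩ = 0}, N = n + m, for linearly independent f^1,…,f^m. For any index set S ⊆ {1,…,N} of size m with det(F_S) ≠ 0, there exists a continuous linear isomorphism T from V (with the sup norm inherited from ℓ∞^N) onto ℓ∞^n such that ‖T‖·‖T⁻¹‖ ≤ max{1, max_{k∈S} ‖h(S)^k‖₁ − 1}. (In particular the Banach–Mazur distance d(V, ℓ∞^n) is at most max{1, max_{k∈S} ‖h(S)^k‖₁ − 1}.) -/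
open Matrix Finset

noncomputable section

namespace BMaux
open Matrix Finset

variable {N m : ℕ} (F : Matrix (Fin N) (Fin m) ℝ) (S : Finset (Fin N)) (hS : S.card = m)

lemma symm_coe (j : Fin m) :
    (S.orderIsoOfFin hS).symm ⟨(S.orderIsoOfFin hS j : Fin N), (S.orderIsoOfFin hS j).2⟩ = j := by
  rw [Subtype.coe_eta]; exact OrderIso.symm_apply_apply _ _

lemma hVec_cramer (k : Fin N) (hk : k ∈ S) (i : Fin N) :
    hVec F S hS k hk i = cramer (rowSub F S hS)ᵀ (fun l => F i l)
      ((S.orderIsoOfFin hS).symm ⟨k, hk⟩) / (rowSub F S hS).det := by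
  rw [hVec, cramer_transpose_apply]

lemma sum_orderIso {N c : ℕ} (t : Finset (Fin N)) (h : t.card = c) (g : Fin N → ℝ) :
    ∑ j : Fin c, g (t.orderIsoOfFin h j) = ∑ i ∈ t, g i := by
  rw [← Finset.sum_coe_sort t g]
  exact Equiv.sum_comp (t.orderIsoOfFin h).toEquiv (fun a => g a)

/-- `h(S)^k` restricted to `S` is the Kronecker delta. -/
lemma hVec_delta (hdet : (rowSub F S hS).det ≠ 0) (k : Fin N) (hk : k ∈ S)
    (k' : Fin N) (hk' : k' ∈ S) :
    hVec F S hS k hk k' = if k' = k then 1 else 0 := by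
  have hrow : (fun l => F k' l) = rowSub F S hS ((S.orderIsoOfFin hS).symm ⟨k', hk'⟩) := by
    funext l
    show F k' l = F ((S.orderIsoOfFin hS) ((S.orderIsoOfFin hS).symm ⟨k', hk'⟩)) l
    rw [OrderIso.apply_symm_apply]
  rw [hVec, hrow]
  by_cases h : k' = k
  · subst h
    rw [if_pos rfl]
    rw [Matrix.updateRow_eq_self, div_self hdet]
  · rw [if_neg h]
    have hne : (S.orderIsoOfFin hS).symm ⟨k', hk'⟩ ≠ (S.orderIsoOfFin hS).symm ⟨k, hk⟩ := by
      intro hcon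
      apply h
      have := congrArg (S.orderIsoOfFin hS) hcon
      rw [OrderIso.apply_symm_apply, OrderIso.apply_symm_apply] at this
      exact congrArg Subtype.val this
    rw [Matrix.det_updateRow_eq_zero hne, zero_div]

/-- Cramer's rule key identity: `∑_{k∈S} F_{k,l} h(S)^k_i = F_{i,l}`. -/
lemma cramer_key (hdet : (rowSub F S hS).det ≠ 0) (i : Fin N) (l : Fin m) :
    ∑ j : Fin m, rowSub F S hS j l *
      hVec F S hS (S.orderIsoOfFin hS j) (S.orderIsoOfFin hS j).2 i = F i l := by
  have h1 : ∀ j : Fin m, hVec F S hS (S.orderIsoOfFin hS j) (S.orderIsoOfFin hS j).2 i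
      = cramer (rowSub F S hS)ᵀ (fun l => F i l) j / (rowSub F S hS).det := by
    intro j
    rw [hVec_cramer, symm_coe]
  calc ∑ j : Fin m, rowSub F S hS j l *
        hVec F S hS (S.orderIsoOfFin hS j) (S.orderIsoOfFin hS j).2 i
      = (∑ j : Fin m, (rowSub F S hS)ᵀ l j *
          cramer (rowSub F S hS)ᵀ (fun l => F i l) j) / (rowSub F S hS).det := by
        rw [Finset.sum_div]
        exact Finset.sum_congr rfl fun j _ => by
          rw [h1 j, Matrix.transpose_apply, mul_div_assoc]
    _ = ((rowSub F S hS)ᵀ *ᵥ cramer (rowSub F S hS)ᵀ (fun l => F i l)) l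
          / (rowSub F S hS).det := rfl
    _ = F i l := by
        rw [Matrix.mulVec_cramer, Matrix.det_transpose, Pi.smul_apply, smul_eq_mul]
        field_simp

/-- Orthogonality: each `h(S)^k` vanishes on `V`. -/
lemma hVec_dot (hdet : (rowSub F S hS).det ≠ 0) (k : Fin N) (hk : k ∈ S)
    (x : Fin N → ℝ) (hx : ∀ l, ∑ i, F i l * x i = 0) :
    ∑ i, hVec F S hS k hk i * x i = 0 := by
  set jk := (S.orderIsoOfFin hS).symm ⟨k, hk⟩ with hjk
  have h2 : (∑ i, x i • (fun l => F i l)) = (fun l => ∑ i, F i l * x i) := by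
    funext l
    rw [Finset.sum_apply]
    exact Finset.sum_congr rfl fun i _ => by simp [mul_comm]
  calc ∑ i, hVec F S hS k hk i * x i
      = (∑ i, x i • cramer (rowSub F S hS)ᵀ (fun l => F i l)) jk / (rowSub F S hS).det := by
        rw [Finset.sum_apply, Finset.sum_div]
        refine Finset.sum_congr rfl fun i _ => ?_
        rw [hVec_cramer, ← hjk, Pi.smul_apply, smul_eq_mul, mul_div_assoc, mul_comm]
    _ = cramer (rowSub F S hS)ᵀ (fun l => ∑ i, F i l * x i) jk / (rowSub F S hS).det := by
        have h3 : cramer (rowSub F S hS)ᵀ (∑ i, x i • fun l => F i l)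
            = ∑ i, x i • cramer (rowSub F S hS)ᵀ (fun l => F i l) := by
          rw [map_sum]
          exact Finset.sum_congr rfl fun i _ => map_smul _ _ _
        rw [← h2, h3]
    _ = 0 := by
        have : (fun l => ∑ i, F i l * x i) = (0 : Fin m → ℝ) := by funext l; exact hx l
        rw [this, map_zero, Pi.zero_apply, zero_div]

/-- Coordinate recovery on `S`. -/
lemma recover (hdet : (rowSub F S hS).det ≠ 0) (k : Fin N) (hk : k ∈ S)
    (x : Fin N → ℝ) (hx : ∀ l, ∑ i, F i l * x i = 0) :
    x k = -∑ i ∈ Sᶜ, hVec F S hS k hk i * x i := by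
  have h0 := hVec_dot F S hS hdet k hk x hx
  rw [← Finset.sum_add_sum_compl S (fun i => hVec F S hS k hk i * x i)] at h0
  have hS1 : ∑ i ∈ S, hVec F S hS k hk i * x i = x k := by
    rw [Finset.sum_congr rfl fun i hi => by
      rw [hVec_delta F S hS hdet k hk i hi, ite_mul, one_mul, zero_mul]]
    rw [Finset.sum_ite_eq' S k x]
    exact if_pos hk
  linarith [h0, hS1]

/-- The ℓ1 mass of `h(S)^k` on `S` equals 1. -/
lemma l1_on_S (hdet : (rowSub F S hS).det ≠ 0) (k : Fin N) (hk : k ∈ S) :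
    ∑ i ∈ S, |hVec F S hS k hk i| = 1 := by
  rw [Finset.sum_congr rfl fun i hi => by
    rw [hVec_delta F S hS hdet k hk i hi]]
  simp [Finset.sum_ite_eq' S k, hk, apply_ite abs]

lemma l1_split (hdet : (rowSub F S hS).det ≠ 0) (k : Fin N) (hk : k ∈ S) :
    ∑ i ∈ Sᶜ, |hVec F S hS k hk i| = l1norm (hVec F S hS k hk) - 1 := by
  have := Finset.sum_add_sum_compl S (fun i => |hVec F S hS k hk i|)
  rw [l1_on_S F S hS hdet k hk] at this
  rw [l1norm, ← this]
  ring

end BMaux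
namespace BMaux

/-- The inverse map: extend `z : ℝ^n` (coordinates on `Sᶜ`) to a vector in `V`. -/
def phiRaw {N n m : ℕ} (f : Fin m → Fin N → ℝ) (S : Finset (Fin N)) (hS : S.card = m)
    (hSc : Sᶜ.card = n) : (Fin n → ℝ) → Fin N → ℝ := fun z i =>
  if hi : i ∈ S then -∑ j, hVec (colMat f) S hS i hi (Sᶜ.orderIsoOfFin hSc j) * z j
  else z ((Sᶜ.orderIsoOfFin hSc).symm ⟨i, Finset.mem_compl.2 hi⟩)

lemma phiRaw_pos {N n m : ℕ} (f : Fin m → Fin N → ℝ) (S : Finset (Fin N)) (hS : S.card = m)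
    (hSc : Sᶜ.card = n) (z : Fin n → ℝ) (i : Fin N) (hi : i ∈ S) :
    phiRaw f S hS hSc z i = -∑ j, hVec (colMat f) S hS i hi (Sᶜ.orderIsoOfFin hSc j) * z j :=
  dif_pos hi

lemma phiRaw_neg {N n m : ℕ} (f : Fin m → Fin N → ℝ) (S : Finset (Fin N)) (hS : S.card = m)
    (hSc : Sᶜ.card = n) (z : Fin n → ℝ) (i : Fin N) (hi : i ∈ Sᶜ) :
    phiRaw f S hS hSc z i = z ((Sᶜ.orderIsoOfFin hSc).symm ⟨i, hi⟩) :=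
  dif_neg (Finset.mem_compl.1 hi)

lemma phiRaw_mem {N n m : ℕ} (f : Fin m → Fin N → ℝ) (S : Finset (Fin N)) (hS : S.card = m)
    (hSc : Sᶜ.card = n) (hdet : (rowSub (colMat f) S hS).det ≠ 0) (z : Fin n → ℝ) :
    phiRaw f S hS hSc z ∈ Vsub f := by
  intro l
  set F := colMat f with hF
  set σ := S.orderIsoOfFin hS with hσ
  set τ := Sᶜ.orderIsoOfFin hSc with hτ
  rw [← Finset.sum_add_sum_compl S (fun i => f l i * phiRaw f S hS hSc z i)]
  have hA : ∑ i ∈ S, f l i * phiRaw f S hS hSc z i = -∑ j, f l (τ j) * z j := by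
    rw [← BMaux.sum_orderIso S hS (fun i => f l i * phiRaw f S hS hSc z i)]
    calc ∑ j' : Fin m, f l (σ j') * phiRaw f S hS hSc z (σ j')
        = ∑ j' : Fin m, -∑ j, rowSub F S hS j' l * hVec F S hS (σ j') (σ j').2 (τ j) * z j := by
          refine Finset.sum_congr rfl fun j' _ => ?_
          rw [phiRaw_pos f S hS hSc z (σ j') (σ j').2]
          rw [mul_neg, Finset.mul_sum]
          congr 1
          refine Finset.sum_congr rfl fun j _ => ?_
          rw [← mul_assoc]
          rfl
      _ = -∑ j' : Fin m, ∑ j, rowSub F S hS j' l * hVec F S hS (σ j') (σ j').2 (τ j) * z j := by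
          rw [Finset.sum_neg_distrib]
      _ = -∑ j, ∑ j' : Fin m, rowSub F S hS j' l * hVec F S hS (σ j') (σ j').2 (τ j) * z j := by
          rw [Finset.sum_comm]
      _ = -∑ j, f l (τ j) * z j := by
          congr 1
          refine Finset.sum_congr rfl fun j _ => ?_
          rw [← Finset.sum_mul]
          rw [BMaux.cramer_key F S hS hdet (τ j) l]
          rfl
  have hB : ∑ i ∈ Sᶜ, f l i * phiRaw f S hS hSc z i = ∑ j, f l (τ j) * z j := by
    rw [← BMaux.sum_orderIso Sᶜ hSc (fun i => f l i * phiRaw f S hS hSc z i)]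
    refine Finset.sum_congr rfl fun j _ => ?_
    rw [phiRaw_neg f S hS hSc z (τ j) (τ j).2, BMaux.symm_coe Sᶜ hSc j]
  rw [hA, hB, neg_add_cancel]

end BMaux
namespace BMaux

/-- The coordinate restriction/extension linear equivalence `V ≃ₗ ℝ^n`. -/
def coordEquiv {N n m : ℕ} (f : Fin m → Fin N → ℝ) (S : Finset (Fin N)) (hS : S.card = m)
    (hSc : Sᶜ.card = n) (hdet : (rowSub (colMat f) S hS).det ≠ 0) :
    (Vsub f) ≃ₗ[ℝ] (Fin n → ℝ) where
  toFun := fun x j => (x : Fin N → ℝ) (Sᶜ.orderIsoOfFin hSc j)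
  map_add' := fun x y => rfl
  map_smul' := fun c x => rfl
  invFun := fun z => ⟨phiRaw f S hS hSc z, phiRaw_mem f S hS hSc hdet z⟩
  left_inv := by
    intro x
    apply Subtype.ext
    funext i
    show phiRaw f S hS hSc (fun j => (x : Fin N → ℝ) (Sᶜ.orderIsoOfFin hSc j)) i = (x : Fin N → ℝ) i
    by_cases hi : i ∈ S
    · rw [phiRaw_pos f S hS hSc _ i hi]
      have hrec := BMaux.recover (colMat f) S hS hdet i hi (x : Fin N → ℝ) (fun l => x.2 l)
      rw [hrec, ← BMaux.sum_orderIso Sᶜ hSc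
        (fun i' => hVec (colMat f) S hS i hi i' * (x : Fin N → ℝ) i')]
    · have hic : i ∈ Sᶜ := Finset.mem_compl.2 hi
      rw [phiRaw_neg f S hS hSc _ i hic]
      show (x : Fin N → ℝ) ((Sᶜ.orderIsoOfFin hSc) ((Sᶜ.orderIsoOfFin hSc).symm ⟨i, hic⟩)) = _
      rw [OrderIso.apply_symm_apply]
  right_inv := by
    intro z
    funext j
    show phiRaw f S hS hSc z (Sᶜ.orderIsoOfFin hSc j) = z j
    rw [phiRaw_neg f S hS hSc z _ (Sᶜ.orderIsoOfFin hSc j).2, BMaux.symm_coe Sᶜ hSc j]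

end BMaux

theorem banachMazur_bound_of_index_set
    {N n m : ℕ} (hN : N = n + m) (f : Fin m → Fin N → ℝ)
    (hf : LinearIndependent ℝ f) (S : Finset (Fin N)) (hS : S.card = m)
    (hdet : (rowSub (colMat f) S hS).det ≠ 0) :
    ∃ T : (Vsub f) ≃L[ℝ] (Fin n → ℝ),
      ‖(T : (Vsub f) →L[ℝ] (Fin n → ℝ))‖ * ‖(T.symm : (Fin n → ℝ) →L[ℝ] (Vsub f))‖ ≤
        max 1 ((⨆ k : {x // x ∈ S}, l1norm (hVec (colMat f) S hS k.1 k.2)) - 1) := by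
  classical
  have hSc : Sᶜ.card = n := by
    rw [Finset.card_compl, hS, Fintype.card_fin, hN]
    omega
  set C := max 1 ((⨆ k : {x // x ∈ S}, l1norm (hVec (colMat f) S hS k.1 k.2)) - 1) with hC
  have hC1 : (1 : ℝ) ≤ C := le_max_left _ _
  have hC0 : (0 : ℝ) ≤ C := le_trans zero_le_one hC1
  refine ⟨(BMaux.coordEquiv f S hS hSc hdet).toContinuousLinearEquiv, ?_⟩
  set T := (BMaux.coordEquiv f S hS hSc hdet).toContinuousLinearEquiv with hT
  have hTn : ‖(T : (Vsub f) →L[ℝ] (Fin n → ℝ))‖ ≤ 1 := by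
    refine ContinuousLinearMap.opNorm_le_bound _ zero_le_one fun x => ?_
    rw [one_mul]
    refine (pi_norm_le_iff_of_nonneg (norm_nonneg x)).2 fun j => ?_
    exact norm_le_pi_norm (x : Fin N → ℝ) _
  have hTs : ‖(T.symm : (Fin n → ℝ) →L[ℝ] (Vsub f))‖ ≤ C := by
    refine ContinuousLinearMap.opNorm_le_bound _ hC0 fun z => ?_
    show ‖BMaux.phiRaw f S hS hSc z‖ ≤ C * ‖z‖
    refine (pi_norm_le_iff_of_nonneg (mul_nonneg hC0 (norm_nonneg z))).2 fun i => ?_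
    by_cases hi : i ∈ S
    · rw [BMaux.phiRaw_pos f S hS hSc z i hi, norm_neg, Real.norm_eq_abs]
      have habs : |∑ j, hVec (colMat f) S hS i hi (Sᶜ.orderIsoOfFin hSc j) * z j|
          ≤ (l1norm (hVec (colMat f) S hS i hi) - 1) * ‖z‖ := by
        calc |∑ j, hVec (colMat f) S hS i hi (Sᶜ.orderIsoOfFin hSc j) * z j|
            ≤ ∑ j, |hVec (colMat f) S hS i hi (Sᶜ.orderIsoOfFin hSc j) * z j| :=
              Finset.abs_sum_le_sum_abs _ _
          _ ≤ ∑ j, |hVec (colMat f) S hS i hi (Sᶜ.orderIsoOfFin hSc j)| * ‖z‖ := by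
              refine Finset.sum_le_sum fun j _ => ?_
              rw [abs_mul]
              exact mul_le_mul_of_nonneg_left (norm_le_pi_norm z j) (abs_nonneg _)
          _ = (∑ j, |hVec (colMat f) S hS i hi (Sᶜ.orderIsoOfFin hSc j)|) * ‖z‖ :=
              (Finset.sum_mul _ _ _).symm
          _ = (l1norm (hVec (colMat f) S hS i hi) - 1) * ‖z‖ := by
              rw [BMaux.sum_orderIso Sᶜ hSc (fun i' => |hVec (colMat f) S hS i hi i'|),
                BMaux.l1_split (colMat f) S hS hdet i hi]
      have hsup : l1norm (hVec (colMat f) S hS i hi) - 1 ≤ C := by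
        refine le_trans ?_ (le_max_right 1 _)
        have hle : l1norm (hVec (colMat f) S hS i hi)
            ≤ ⨆ k : {x // x ∈ S}, l1norm (hVec (colMat f) S hS k.1 k.2) :=
          le_ciSup (f := fun k : {x // x ∈ S} => l1norm (hVec (colMat f) S hS k.1 k.2))
            (Set.Finite.bddAbove (Set.finite_range _)) ⟨i, hi⟩
        linarith
      exact le_trans habs (mul_le_mul_of_nonneg_right hsup (norm_nonneg z))
    · rw [BMaux.phiRaw_neg f S hS hSc z i (Finset.mem_compl.2 hi)]
      exact le_trans (norm_le_pi_norm z _) (le_mul_of_one_le_left (norm_nonneg z) hC1)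
  calc ‖(T : (Vsub f) →L[ℝ] (Fin n → ℝ))‖ * ‖(T.symm : (Fin n → ℝ) →L[ℝ] (Vsub f))‖
      ≤ 1 * C := mul_le_mul hTn hTs (norm_nonneg ((T.symm : (Fin n → ℝ) →L[ℝ] (Vsub f)))) zero_le_one
    _ = C := one_mul C

end
end

section
/- Let V = {x ∈ ℝ^N : ⟨f^1,x⟩ = ⋯ = ⟨f^m,x⟩ = 0} for linearly independent f^1,…,f^m ∈ ℝ^N, and let S ⊆ {1,…,N} be an index set of size m with det(F_S) ≠ 0. Then for every v ∈ V, ‖v‖∞ ≤ max{1, max_{k∈S} ‖h(S)^k_{S^c}‖₁} · ‖v_{S^c}‖∞, where v_{S^c} is the restriction of v to the complementary index set S^c and h(S)^k_{S^c} is the restriction of h(S)^k to S^c. -/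
open Matrix Finset

noncomputable section

lemma det_updateRow_finset_sum {n : Type*} [DecidableEq n] [Fintype n]
    (A : Matrix n n ℝ) (j : n) {ι : Type*} (s : Finset ι) (u : ι → n → ℝ) :
    (A.updateRow j (∑ i ∈ s, u i)).det = ∑ i ∈ s, (A.updateRow j (u i)).det := by
  classical
  induction s using Finset.induction_on with
  | empty =>
      simp only [Finset.sum_empty]
      exact Matrix.det_eq_zero_of_row_eq_zero j (fun l => by simp)
  | @insert a s ha ih =>
      rw [Finset.sum_insert ha, Matrix.det_updateRow_add, ih, Finset.sum_insert ha]

lemma key_identity {N m : ℕ} (f : Fin m → Fin N → ℝ)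
    (S : Finset (Fin N)) (hS : S.card = m)
    (hdet : (rowSub (colMat f) S hS).det ≠ 0)
    (v : Fin N → ℝ) (hv : v ∈ Vsub f) (k : Fin N) (hk : k ∈ S) :
    v k = -∑ i ∈ Sᶜ, hVec (colMat f) S hS k hk i * v i := by
  set A := rowSub (colMat f) S hS with hA
  set e := S.orderIsoOfFin hS with he
  set j := e.symm ⟨k, hk⟩ with hj
  set g : Fin N → ℝ := hVec (colMat f) S hS k hk with hg
  -- total sum is zero
  have htot : ∑ i, g i * v i = 0 := by
    have : ∑ i, g i * v i =
        (A.updateRow j (∑ i, v i • (fun l => colMat f i l))).det / A.det := by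
      rw [det_updateRow_finset_sum]
      rw [Finset.sum_div]
      refine Finset.sum_congr rfl fun i _ => ?_
      rw [Matrix.det_updateRow_smul]
      simp only [hg, hVec, smul_eq_mul]
      ring
    rw [this]
    have hzero : (∑ i, v i • (fun l => colMat f i l)) = (0 : Fin m → ℝ) := by
      funext l
      simp only [Finset.sum_apply, Pi.smul_apply, smul_eq_mul, Pi.zero_apply]
      have := hv l
      rw [← this]
      exact Finset.sum_congr rfl fun i _ => by simp [colMat]; ring
    rw [hzero]
    rw [Matrix.det_eq_zero_of_row_eq_zero j (fun l => by simp)]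
    simp
  -- sum over S equals v k
  have hgS : ∀ j' : Fin m, g (e j') = if j' = j then 1 else 0 := by
    intro j'
    have hrow : (fun l => colMat f (e j') l) = A j' := by
      funext l; simp [hA, rowSub, he, Finset.coe_orderIsoOfFin_apply]
    by_cases hjj : j' = j
    · subst hjj
      simp only [hg, hVec, ← hj, hrow, Matrix.updateRow_eq_self, if_pos rfl]
      show (A.updateRow j (A j)).det / A.det = if True then 1 else 0
      rw [Matrix.updateRow_eq_self, if_pos trivial]
      exact div_self hdet
    · simp only [hg, hVec, ← hj, hrow, if_neg hjj]
      rw [Matrix.det_updateRow_eq_zero (fun h => hjj h)]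
      simp
  have hSsum : ∑ i ∈ S, g i * v i = v k := by
    rw [← Finset.sum_coe_sort S (fun i => g i * v i)]
    rw [← e.toEquiv.sum_comp (fun x : {x // x ∈ S} => g x.1 * v x.1)]
    have : ∀ j' : Fin m, g (e j') * v (e j') = if j' = j then v (e j') else 0 := by
      intro j'
      rw [hgS j']
      by_cases hjj : j' = j <;> simp [hjj]
    have h2 : ∑ i : Fin m, g ↑(e.toEquiv i) * v ↑(e.toEquiv i)
        = ∑ i : Fin m, if i = j then v ↑(e i) else 0 :=
      Finset.sum_congr rfl fun j' _ => this j'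
    rw [h2, Finset.sum_ite_eq' Finset.univ j (fun j' => v ↑(e j'))]
    simp [hj]
  have hsplit : ∑ i, g i * v i = ∑ i ∈ S, g i * v i + ∑ i ∈ Sᶜ, g i * v i := by
    rw [← Finset.sum_add_sum_compl S]
  rw [hsplit, hSsum] at htot
  linarith

theorem sup_norm_le_of_restriction
    {N m : ℕ} (f : Fin m → Fin N → ℝ) (hf : LinearIndependent ℝ f)
    (S : Finset (Fin N)) (hS : S.card = m)
    (hdet : (rowSub (colMat f) S hS).det ≠ 0) :
    ∀ v ∈ Vsub f,
      ‖v‖ ≤ max 1 (⨆ k : {x // x ∈ S}, ∑ i ∈ Sᶜ, |hVec (colMat f) S hS k.1 k.2 i|) *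
        (⨆ i : {x // x ∈ Sᶜ}, |v i.1|) := by
  intro v hv
  set T := ⨆ k : {x // x ∈ S}, ∑ i ∈ Sᶜ, |hVec (colMat f) S hS k.1 k.2 i| with hT
  set Mv := ⨆ i : {x // x ∈ Sᶜ}, |v i.1| with hMv
  have hMv0 : 0 ≤ Mv := Real.iSup_nonneg fun i => abs_nonneg _
  have hmax1 : (1 : ℝ) ≤ max 1 T := le_max_left _ _
  have hRHS0 : 0 ≤ max 1 T * Mv := mul_nonneg (le_trans zero_le_one hmax1) hMv0
  have hvi : ∀ i ∈ Sᶜ, |v i| ≤ Mv := by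
    intro i hi
    rw [hMv]
    exact le_ciSup (Set.Finite.bddAbove (Set.finite_range fun x : {x // x ∈ Sᶜ} => |v x.1|))
      (⟨i, hi⟩ : {x // x ∈ Sᶜ})
  rw [pi_norm_le_iff_of_nonneg hRHS0]
  intro i
  rw [Real.norm_eq_abs]
  by_cases hi : i ∈ S
  · -- use key identity
    have hkey := key_identity f S hS hdet v hv i hi
    have hTk : ∑ l ∈ Sᶜ, |hVec (colMat f) S hS i hi l| ≤ T := by
      rw [hT]
      exact le_ciSup (Set.Finite.bddAbove (Set.finite_range
        fun k : {x // x ∈ S} => ∑ l ∈ Sᶜ, |hVec (colMat f) S hS k.1 k.2 l|))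
        (⟨i, hi⟩ : {x // x ∈ S})
    calc |v i| = |∑ l ∈ Sᶜ, hVec (colMat f) S hS i hi l * v l| := by
          rw [hkey, abs_neg]
      _ ≤ ∑ l ∈ Sᶜ, |hVec (colMat f) S hS i hi l * v l| := Finset.abs_sum_le_sum_abs _ _
      _ ≤ ∑ l ∈ Sᶜ, |hVec (colMat f) S hS i hi l| * Mv := by
          refine Finset.sum_le_sum fun l hl => ?_
          rw [abs_mul]
          exact mul_le_mul_of_nonneg_left (hvi l hl) (abs_nonneg _)
      _ = (∑ l ∈ Sᶜ, |hVec (colMat f) S hS i hi l|) * Mv := by rw [Finset.sum_mul]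
      _ ≤ T * Mv := mul_le_mul_of_nonneg_right hTk hMv0
      _ ≤ max 1 T * Mv := mul_le_mul_of_nonneg_right (le_max_right _ _) hMv0
  · have : i ∈ Sᶜ := Finset.mem_compl.mpr hi
    calc |v i| ≤ Mv := hvi i this
      _ = 1 * Mv := (one_mul _).symm
      _ ≤ max 1 T * Mv := mul_le_mul_of_nonneg_right hmax1 hMv0

end
end

section
/- Let f^1,…,f^m ∈ ℝ^N be linearly independent with matrix F ∈ ℝ^{N×m}, let M ∈ ℝ^{m×m} be invertible, and let G = F·M (so the columns of G form another basis of span{f^1,…,f^m}). Then for every index set S ⊆ {1,…,N} of size m with det(F_S) ≠ 0, one also has det(G_S) ≠ 0, and the vectors h(S)^k computed from G coincide with the vectors h(S)^k computed from F, for all k ∈ S. In other words, the vectors h(S)^k depend only on the subspace spanned by the columns of F, not on the choice of basis. -/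
open Matrix Finset

noncomputable section

theorem hVec_independent_of_basis
    {N m : ℕ} (F : Matrix (Fin N) (Fin m) ℝ)
    (hF : LinearIndependent ℝ (fun j => fun i => F i j))
    (M : Matrix (Fin m) (Fin m) ℝ) (hM : IsUnit M.det)
    (G : Matrix (Fin N) (Fin m) ℝ) (hG : G = F * M)
    (S : Finset (Fin N)) (hS : S.card = m) (hdet : (rowSub F S hS).det ≠ 0) :
    (rowSub G S hS).det ≠ 0 ∧
    ∀ (k : Fin N) (hk : k ∈ S), hVec G S hS k hk = hVec F S hS k hk := by
  have hMdet : M.det ≠ 0 := hM.ne_zero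
  have hrow : rowSub G S hS = rowSub F S hS * M := by
    ext j l
    simp [rowSub, hG, Matrix.mul_apply]
  have hdetG : (rowSub G S hS).det = (rowSub F S hS).det * M.det := by
    rw [hrow, Matrix.det_mul]
  refine ⟨by rw [hdetG]; exact mul_ne_zero hdet hMdet, ?_⟩
  intro k hk
  funext i
  have hupd : Matrix.updateRow (rowSub G S hS) ((S.orderIsoOfFin hS).symm ⟨k, hk⟩)
      (fun l => G i l)
      = (Matrix.updateRow (rowSub F S hS) ((S.orderIsoOfFin hS).symm ⟨k, hk⟩)
          (fun l => F i l)) * M := by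
    ext a b
    by_cases h : a = (S.orderIsoOfFin hS).symm ⟨k, hk⟩ <;>
      simp [h, Matrix.updateRow_apply, Matrix.mul_apply, rowSub, hG]
  simp only [hVec, hupd, Matrix.det_mul, hdetG]
  field_simp

end
end

section
/- Let V = {x ∈ ℝ^N : ⟨f^1,x⟩ = ⋯ = ⟨f^m,x⟩ = 0} for linearly independent f^1,…,f^m ∈ ℝ^N, and let P be a projection from ℓ∞^N onto V whose operator norm ‖P‖ equals the projection constant λ(V), i.e., ‖P‖ ≤ ‖Q‖ for every projection Q from ℓ∞^N onto V. Then for any index set S ⊆ {1,…,N} of size m such that det(F_S) ≠ 0 and det(I_m − P_S^S) ≠ 0, one has max_{k∈S} ‖h(S)^k‖₁ − 1 ≤ 1 + (‖P‖ − 1)·‖(I_m − P_S^S)^{-1}‖, where P_S^S is the m×m submatrix of (the matrix of) P with rows and columns indexed by S, and ‖·‖ on m×m matrices is the maximum absolute row-sum norm (the operator norm from ℓ∞^m to ℓ∞^m). -/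
open Matrix Finset

noncomputable section

/-- The square submatrix `A_S^S` of `A` with rows and columns indexed by `S`. -/
def subSq {N m : ℕ} (A : Matrix (Fin N) (Fin N) ℝ) (S : Finset (Fin N)) (hS : S.card = m) :
    Matrix (Fin m) (Fin m) ℝ :=
  Matrix.of fun a b => A (S.orderIsoOfFin hS a) (S.orderIsoOfFin hS b)

/-- The maximum absolute row-sum norm of a square matrix
(the operator norm from `ℓ∞^m` to `ℓ∞^m`). -/
def maxRowSum {m : ℕ} (A : Matrix (Fin m) (Fin m) ℝ) : ℝ := ⨆ i, ∑ j, |A i j|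

/-! ### Auxiliary material for the proof -/

/-- The increasing enumeration of `S` as a map `Fin m → Fin N`. -/
def sFun {N m : ℕ} (S : Finset (Fin N)) (hS : S.card = m) (a : Fin m) : Fin N :=
  (S.orderIsoOfFin hS a : Fin N)

lemma sFun_mem {N m : ℕ} (S : Finset (Fin N)) (hS : S.card = m) (a : Fin m) :
    sFun S hS a ∈ S := (S.orderIsoOfFin hS a).2

lemma sFun_inj {N m : ℕ} (S : Finset (Fin N)) (hS : S.card = m) :
    Function.Injective (sFun S hS) := fun a b hab =>
  (S.orderIsoOfFin hS).injective (Subtype.ext hab)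

lemma hVec_congr {N m : ℕ} (F : Matrix (Fin N) (Fin m) ℝ) (S : Finset (Fin N)) (hS : S.card = m)
    {k k' : Fin N} (hk : k ∈ S) (hk' : k' ∈ S) (h : k = k') :
    hVec F S hS k hk = hVec F S hS k' hk' := by subst h; rfl

lemma aux_cramer {N m : ℕ} (F : Matrix (Fin N) (Fin m) ℝ) (S : Finset (Fin N)) (hS : S.card = m)
    (hdet : (rowSub F S hS).det ≠ 0) (i : Fin N) (j : Fin m) :
    ∑ l, hVec F S hS (sFun S hS l) (sFun_mem S hS l) i * rowSub F S hS l j = F i j := by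
  have hv : ∀ l : Fin m, hVec F S hS (sFun S hS l) (sFun_mem S hS l) i
      = ((rowSub F S hS)ᵀ.cramer (fun t => F i t)) l / (rowSub F S hS).det := by
    intro l
    unfold hVec sFun
    have hsymm : (S.orderIsoOfFin hS).symm ⟨((S.orderIsoOfFin hS) l : Fin N),
        sFun_mem S hS l⟩ = l := (S.orderIsoOfFin hS).symm_apply_apply l
    rw [hsymm, Matrix.cramer_apply]
    congr 1
    rw [Matrix.updateCol_transpose, Matrix.det_transpose]
  calc ∑ l, hVec F S hS (sFun S hS l) (sFun_mem S hS l) i * rowSub F S hS l j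
      = (∑ l, (rowSub F S hS)ᵀ j l * ((rowSub F S hS)ᵀ.cramer (fun t => F i t)) l)
          / (rowSub F S hS).det := by
        rw [Finset.sum_div]
        refine Finset.sum_congr rfl fun l _ => ?_
        rw [hv l, Matrix.transpose_apply]; ring
    _ = (((rowSub F S hS)ᵀ *ᵥ (rowSub F S hS)ᵀ.cramer (fun t => F i t)) j)
          / (rowSub F S hS).det := by rfl
    _ = F i j := by
        rw [Matrix.mulVec_cramer]
        simp only [Matrix.det_transpose, Pi.smul_apply, smul_eq_mul]
        exact mul_div_cancel_left₀ _ hdet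

lemma aux_delta {N m : ℕ} (F : Matrix (Fin N) (Fin m) ℝ) (S : Finset (Fin N)) (hS : S.card = m)
    (hdet : (rowSub F S hS).det ≠ 0) (k j : Fin m) :
    hVec F S hS (sFun S hS k) (sFun_mem S hS k) (sFun S hS j) = if k = j then 1 else 0 := by
  unfold hVec sFun
  have hsymm : (S.orderIsoOfFin hS).symm ⟨((S.orderIsoOfFin hS) k : Fin N),
      sFun_mem S hS k⟩ = k := (S.orderIsoOfFin hS).symm_apply_apply k
  rw [hsymm]
  have hrow : (fun l => F ((S.orderIsoOfFin hS) j : Fin N) l) = rowSub F S hS j := rfl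
  rw [hrow]
  by_cases hkj : k = j
  · subst hkj
    rw [Matrix.updateRow_eq_self, if_pos rfl, div_self hdet]
  · rw [if_neg hkj]
    have hzero : ((rowSub F S hS).updateRow k (rowSub F S hS j)).det = 0 := by
      apply Matrix.det_zero_of_row_eq hkj
      rw [Matrix.updateRow_self, Matrix.updateRow_ne (Ne.symm hkj)]
    rw [hzero, zero_div]

lemma row_in_span {N m : ℕ} (f : Fin m → Fin N → ℝ) (r : Fin N → ℝ)
    (hr : ∀ v ∈ Vsub f, ∑ i, r i * v i = 0) :
    ∃ c : Fin m → ℝ, ∀ i, r i = ∑ j, c j * f j i := by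
  classical
  set g : (Fin N → ℝ) →ₗ[ℝ] (Fin m → ℝ) :=
    Matrix.toLin' (Matrix.of fun j i => f j i) with hgdef
  have hg : ∀ x j, g x j = ∑ i, f j i * x i := by
    intro x j
    simp [hgdef, Matrix.toLin'_apply, Matrix.mulVec, dotProduct]
  have hker : LinearMap.ker g = Vsub f := by
    ext x
    constructor
    · intro hx j
      have := congrFun (LinearMap.mem_ker.mp hx) j
      rw [hg] at this
      exact this
    · intro hx
      rw [LinearMap.mem_ker]
      funext j
      rw [hg x j]
      exact hx j
  set φ : (Fin N → ℝ) →ₗ[ℝ] ℝ := ∑ i, r i • LinearMap.proj i with hφdef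
  have hφ : ∀ x, φ x = ∑ i, r i * x i := by
    intro x
    simp [hφdef, LinearMap.sum_apply, LinearMap.smul_apply, LinearMap.proj_apply]
  have hmem : φ ∈ (LinearMap.ker g).dualAnnihilator := by
    rw [Submodule.mem_dualAnnihilator]
    intro w hw
    rw [hφ]
    exact hr w (hker ▸ hw)
  rw [← LinearMap.range_dualMap_eq_dualAnnihilator_ker] at hmem
  obtain ⟨ψ, hψ⟩ := hmem
  refine ⟨fun j => ψ (Pi.single j 1), fun i => ?_⟩
  have h1 : φ (Pi.single i 1) = r i := by
    rw [hφ]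
    simp [Pi.single_apply, mul_ite]
  have h2 : g (Pi.single i 1) = ∑ j, f j i • (Pi.single j 1 : Fin m → ℝ) := by
    funext t
    rw [hg]
    simp [Pi.single_apply, mul_ite, Finset.sum_apply]
  calc r i = φ (Pi.single i 1) := h1.symm
    _ = ψ (g (Pi.single i 1)) := by rw [← hψ]; rfl
    _ = ∑ j, ψ (Pi.single j 1) * f j i := by
        rw [h2, map_sum]
        refine Finset.sum_congr rfl fun j _ => ?_
        rw [_root_.map_smul]
        simp [smul_eq_mul, mul_comm]

theorem hVec_l1_bound_of_minimal_projection
    {N m : ℕ} (f : Fin m → Fin N → ℝ) (hf : LinearIndependent ℝ f)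
    (P : (Fin N → ℝ) →L[ℝ] (Fin N → ℝ)) (hP : IsProjOnto (Vsub f) P)
    (hmin : ∀ Q : (Fin N → ℝ) →L[ℝ] (Fin N → ℝ), IsProjOnto (Vsub f) Q → ‖P‖ ≤ ‖Q‖)
    (S : Finset (Fin N)) (hS : S.card = m)
    (hdet : (rowSub (colMat f) S hS).det ≠ 0)
    (hdet2 : (1 - subSq (LinearMap.toMatrix'
        (P : (Fin N → ℝ) →ₗ[ℝ] (Fin N → ℝ))) S hS).det ≠ 0) :
    (⨆ k : {x // x ∈ S}, l1norm (hVec (colMat f) S hS k.1 k.2)) - 1 ≤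
      1 + (‖P‖ - 1) *
        maxRowSum (1 - subSq (LinearMap.toMatrix'
          (P : (Fin N → ℝ) →ₗ[ℝ] (Fin N → ℝ))) S hS)⁻¹ := by
  classical
  rcases eq_or_ne m 0 with hm | hm
  · subst hm
    have hSe : S = ∅ := Finset.card_eq_zero.mp hS
    haveI h1 : IsEmpty {x // x ∈ S} :=
      ⟨fun x => by rw [hSe] at x; exact absurd x.2 (Finset.notMem_empty _)⟩
    rw [Real.iSup_of_isEmpty]
    unfold maxRowSum
    rw [Real.iSup_of_isEmpty, mul_zero]
    norm_num
  set F := colMat f with hF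
  set P' := LinearMap.toMatrix' (P : (Fin N → ℝ) →ₗ[ℝ] (Fin N → ℝ)) with hP'
  set E := (1 : Matrix (Fin m) (Fin m) ℝ) - subSq P' S hS with hEdef
  set M := E⁻¹ with hMdef
  haveI : Nonempty (Fin m) := ⟨⟨0, Nat.pos_of_ne_zero hm⟩⟩
  haveI hSne : Nonempty {x // x ∈ S} := by
    have hpos : 0 < S.card := by rw [hS]; exact Nat.pos_of_ne_zero hm
    obtain ⟨x, hx⟩ := Finset.card_pos.mp hpos
    exact ⟨⟨x, hx⟩⟩
  have reindex : ∀ g : Fin N → ℝ, ∑ i ∈ S, g i = ∑ b, g (sFun S hS b) := by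
    intro g
    rw [← Finset.sum_coe_sort S g,
      ← Equiv.sum_comp (S.orderIsoOfFin hS).toEquiv (fun i : {x // x ∈ S} => g i)]
    rfl
  have hPapp : ∀ x, P x = P'.mulVec x := by
    intro x
    have h := Matrix.toLin'_toMatrix' (P : (Fin N → ℝ) →ₗ[ℝ] (Fin N → ℝ))
    calc P x = Matrix.toLin' P' x := by rw [hP', h]; rfl
      _ = P'.mulVec x := Matrix.toLin'_apply _ _
  have rowsum_le : ∀ a : Fin N, ∑ i, |P' a i| ≤ ‖P‖ := by
    intro a
    set x : Fin N → ℝ := fun i => if P' a i < 0 then (-1 : ℝ) else 1 with hxdef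
    have hx1 : ‖x‖ ≤ 1 := by
      rw [pi_norm_le_iff_of_nonneg zero_le_one]
      intro i
      rw [hxdef]
      by_cases hc : P' a i < 0
      · simp [hc]
      · simp [hc]
    have hsum : ∑ i, |P' a i| = P x a := by
      rw [hPapp]
      show ∑ i, |P' a i| = ∑ i, P' a i * x i
      refine Finset.sum_congr rfl fun i _ => ?_
      show |P' a i| = P' a i * (if P' a i < 0 then (-1:ℝ) else 1)
      by_cases hc : P' a i < 0
      · rw [if_pos hc, abs_of_neg hc]; ring
      · rw [if_neg hc, abs_of_nonneg (not_lt.mp hc)]; ring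
    rw [hsum]
    calc P x a ≤ |P x a| := le_abs_self _
      _ ≤ ‖P x‖ := by rw [← Real.norm_eq_abs]; exact norm_le_pi_norm (P x) a
      _ ≤ ‖P‖ * ‖x‖ := P.le_opNorm x
      _ ≤ ‖P‖ := mul_le_of_le_one_right (norm_nonneg _) hx1
  have hproj1 : ∀ v ∈ Vsub f, P v = v := hP.2
  have hproj2 : ∀ x, P x ∈ Vsub f := by
    intro x
    rw [← hP.1]
    exact ⟨x, rfl⟩
  -- the key representation: rows of `1 - P` restricted to `S` determine `hVec`
  have key : ∀ (a : Fin m) (i : Fin N),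
      (if sFun S hS a = i then (1:ℝ) else 0) - P' (sFun S hS a) i
        = ∑ b, E a b * hVec F S hS (sFun S hS b) (sFun_mem S hS b) i := by
    intro a i
    have hann : ∀ v ∈ Vsub f,
        ∑ i, ((if sFun S hS a = i then (1:ℝ) else 0) - P' (sFun S hS a) i) * v i = 0 := by
      intro v hv
      have hPv : P v = v := hproj1 v hv
      have e1 : ∑ i, ((if sFun S hS a = i then (1:ℝ) else 0) - P' (sFun S hS a) i) * v i
          = (∑ i, (if sFun S hS a = i then v i else 0)) - ∑ i, P' (sFun S hS a) i * v i := by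
        rw [← Finset.sum_sub_distrib]
        refine Finset.sum_congr rfl fun i _ => ?_
        split_ifs <;> ring
      have e2 : ∑ i, (if sFun S hS a = i then v i else 0) = v (sFun S hS a) := by simp
      have e3 : ∑ i, P' (sFun S hS a) i * v i = P v (sFun S hS a) := by rw [hPapp]; rfl
      rw [e1, e2, e3, hPv, sub_self]
    obtain ⟨c, hc⟩ := row_in_span f
      (fun i => (if sFun S hS a = i then (1:ℝ) else 0) - P' (sFun S hS a) i) hann
    have hEab : ∀ b, E a b = ∑ j, c j * rowSub F S hS b j := by
      intro b
      have h1 : E a b = (if a = b then (1:ℝ) else 0) - P' (sFun S hS a) (sFun S hS b) := by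
        rw [hEdef]
        show (1 : Matrix (Fin m) (Fin m) ℝ) a b - subSq P' S hS a b = _
        rw [Matrix.one_apply]
        rfl
      have h2 : (if sFun S hS a = sFun S hS b then (1:ℝ) else 0)
          = (if a = b then (1:ℝ) else 0) := by
        by_cases hab : a = b
        · subst hab; simp
        · rw [if_neg hab, if_neg (fun e => hab (sFun_inj S hS e))]
      rw [h1, ← h2]
      exact (hc (sFun S hS b)).trans (Finset.sum_congr rfl fun j _ => rfl)
    calc (if sFun S hS a = i then (1:ℝ) else 0) - P' (sFun S hS a) i
        = ∑ j, c j * F i j := hc i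
      _ = ∑ j, c j * (∑ b, hVec F S hS (sFun S hS b) (sFun_mem S hS b) i
            * rowSub F S hS b j) := by
          refine Finset.sum_congr rfl fun j _ => ?_
          rw [aux_cramer F S hS hdet i j]
      _ = ∑ b, (∑ j, c j * rowSub F S hS b j)
            * hVec F S hS (sFun S hS b) (sFun_mem S hS b) i := by
          simp_rw [Finset.mul_sum]
          rw [Finset.sum_comm]
          refine Finset.sum_congr rfl fun b _ => ?_
          rw [Finset.sum_mul]
          exact Finset.sum_congr rfl fun j _ => by ring
      _ = ∑ b, E a b * hVec F S hS (sFun S hS b) (sFun_mem S hS b) i := by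
          refine Finset.sum_congr rfl fun b _ => ?_
          rw [hEab b]
  have hdetE : IsUnit E.det := isUnit_iff_ne_zero.mpr hdet2
  have hME : M * E = 1 := Matrix.nonsing_inv_mul E hdetE
  have hinv : ∀ k b, ∑ a, M k a * E a b = (if k = b then (1:ℝ) else 0) := by
    intro k b
    have h := congrFun (congrFun hME k) b
    rw [Matrix.mul_apply] at h
    rw [h, Matrix.one_apply]
  have hrep : ∀ (k : Fin m) (i : Fin N), hVec F S hS (sFun S hS k) (sFun_mem S hS k) i
      = ∑ a, M k a * ((if sFun S hS a = i then (1:ℝ) else 0) - P' (sFun S hS a) i) := by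
    intro k i
    refine Eq.symm ?_
    calc ∑ a, M k a * ((if sFun S hS a = i then (1:ℝ) else 0) - P' (sFun S hS a) i)
        = ∑ a, M k a * ∑ b, E a b * hVec F S hS (sFun S hS b) (sFun_mem S hS b) i := by
          refine Finset.sum_congr rfl fun a _ => ?_
          rw [key a i]
      _ = ∑ b, (∑ a, M k a * E a b) * hVec F S hS (sFun S hS b) (sFun_mem S hS b) i := by
          simp_rw [Finset.mul_sum]
          rw [Finset.sum_comm]
          refine Finset.sum_congr rfl fun b _ => ?_
          rw [Finset.sum_mul]
          exact Finset.sum_congr rfl fun a _ => by ring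
      _ = ∑ b, (if k = b then (1:ℝ) else 0)
            * hVec F S hS (sFun S hS b) (sFun_mem S hS b) i := by
          refine Finset.sum_congr rfl fun b _ => ?_
          rw [hinv]
      _ = hVec F S hS (sFun S hS k) (sFun_mem S hS k) i := by
          simp
  have hPa : ∀ a : Fin m, ∑ i ∈ Sᶜ, |P' (sFun S hS a) i|
      ≤ ‖P‖ - ∑ b, |P' (sFun S hS a) (sFun S hS b)| := by
    intro a
    have h1 := Finset.sum_add_sum_compl S (fun i => |P' (sFun S hS a) i|)
    have h2 := reindex (fun i => |P' (sFun S hS a) i|)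
    have h3 := rowsum_le (sFun S hS a)
    linarith [h1, h2, h3]
  have e1 : ∀ a b : Fin m, P' (sFun S hS a) (sFun S hS b)
      = (if a = b then (1:ℝ) else 0) - E a b := by
    intro a b
    have h1 : E a b = (if a = b then (1:ℝ) else 0) - P' (sFun S hS a) (sFun S hS b) := by
      rw [hEdef]
      show (1 : Matrix (Fin m) (Fin m) ℝ) a b - subSq P' S hS a b = _
      rw [Matrix.one_apply]
      rfl
    rw [h1]; ring
  have hlow : ∀ k : Fin m, (∑ a, |M k a|) - 1
      ≤ ∑ a, |M k a| * ∑ b, |P' (sFun S hS a) (sFun S hS b)| := by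
    intro k
    have hsum1 : ∀ b, ∑ a, M k a * P' (sFun S hS a) (sFun S hS b)
        = M k b - (if k = b then (1:ℝ) else 0) := by
      intro b
      calc ∑ a, M k a * P' (sFun S hS a) (sFun S hS b)
          = (∑ a, (if a = b then M k a else 0)) - ∑ a, M k a * E a b := by
            rw [← Finset.sum_sub_distrib]
            refine Finset.sum_congr rfl fun a _ => ?_
            rw [e1 a b]
            split_ifs <;> ring
        _ = M k b - (if k = b then (1:ℝ) else 0) := by
            rw [hinv]
            congr 1
            simp
    have h2 : ∀ b : Fin m, |M k b| - (if k = b then (1:ℝ) else 0)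
        ≤ ∑ a, |M k a| * |P' (sFun S hS a) (sFun S hS b)| := by
      intro b
      have habs1 : |M k b - (if k = b then (1:ℝ) else 0)|
          ≤ ∑ a, |M k a| * |P' (sFun S hS a) (sFun S hS b)| := by
        rw [← hsum1 b]
        refine (Finset.abs_sum_le_sum_abs _ _).trans ?_
        exact le_of_eq (Finset.sum_congr rfl fun a _ => abs_mul _ _)
      have habs2 : |M k b| - (if k = b then (1:ℝ) else 0)
          ≤ |M k b - (if k = b then (1:ℝ) else 0)| := by
        have hit : |(if k = b then (1:ℝ) else 0)| = (if k = b then (1:ℝ) else 0) := by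
          split_ifs <;> simp
        calc |M k b| - (if k = b then (1:ℝ) else 0)
            = |M k b| - |(if k = b then (1:ℝ) else 0)| := by rw [hit]
          _ ≤ |M k b - (if k = b then (1:ℝ) else 0)| := abs_sub_abs_le_abs_sub _ _
      linarith
    calc (∑ a, |M k a|) - 1 = ∑ b, (|M k b| - (if k = b then (1:ℝ) else 0)) := by
          rw [Finset.sum_sub_distrib]
          congr 1
          simp
      _ ≤ ∑ b, ∑ a, |M k a| * |P' (sFun S hS a) (sFun S hS b)| :=
          Finset.sum_le_sum fun b _ => h2 b
      _ = ∑ a, |M k a| * ∑ b, |P' (sFun S hS a) (sFun S hS b)| := by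
          rw [Finset.sum_comm]
          exact Finset.sum_congr rfl fun a _ => (Finset.mul_sum _ _ _).symm
  have habs : ∀ k : Fin m, l1norm (hVec F S hS (sFun S hS k) (sFun_mem S hS k))
      ≤ 2 + (‖P‖ - 1) * ∑ a, |M k a| := by
    intro k
    have hS1 : ∑ i ∈ S, |hVec F S hS (sFun S hS k) (sFun_mem S hS k) i| = 1 := by
      rw [reindex (fun i => |hVec F S hS (sFun S hS k) (sFun_mem S hS k) i|)]
      have hterm : ∀ b ∈ univ, |hVec F S hS (sFun S hS k) (sFun_mem S hS k) (sFun S hS b)|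
          = if k = b then (1:ℝ) else 0 := by
        intro b _
        rw [aux_delta F S hS hdet k b]
        split_ifs <;> simp
      rw [Finset.sum_congr rfl hterm]
      simp
    have hoff : ∀ i ∈ Sᶜ, |hVec F S hS (sFun S hS k) (sFun_mem S hS k) i|
        ≤ ∑ a, |M k a| * |P' (sFun S hS a) i| := by
      intro i hi
      have hi' : i ∉ S := Finset.mem_compl.mp hi
      rw [hrep k i]
      have hne : ∀ a ∈ univ,
          M k a * ((if sFun S hS a = i then (1:ℝ) else 0) - P' (sFun S hS a) i)
          = M k a * (- P' (sFun S hS a) i) := by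
        intro a _
        rw [if_neg (show ¬ sFun S hS a = i from
          fun e => hi' (by rw [← e]; exact sFun_mem S hS a))]
        ring
      rw [Finset.sum_congr rfl hne]
      refine (Finset.abs_sum_le_sum_abs _ _).trans ?_
      refine Finset.sum_le_sum fun a _ => ?_
      rw [abs_mul, abs_neg]
    have c1 : l1norm (hVec F S hS (sFun S hS k) (sFun_mem S hS k))
        = 1 + ∑ i ∈ Sᶜ, |hVec F S hS (sFun S hS k) (sFun_mem S hS k) i| := by
      unfold l1norm
      rw [← Finset.sum_add_sum_compl S
        (fun i => |hVec F S hS (sFun S hS k) (sFun_mem S hS k) i|), hS1]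
    have c2 : ∑ i ∈ Sᶜ, |hVec F S hS (sFun S hS k) (sFun_mem S hS k) i|
        ≤ ∑ i ∈ Sᶜ, ∑ a, |M k a| * |P' (sFun S hS a) i| := Finset.sum_le_sum hoff
    have c3 : ∑ i ∈ Sᶜ, ∑ a, |M k a| * |P' (sFun S hS a) i|
        = ∑ a, |M k a| * ∑ i ∈ Sᶜ, |P' (sFun S hS a) i| := by
      rw [Finset.sum_comm]
      exact Finset.sum_congr rfl fun a _ => (Finset.mul_sum _ _ _).symm
    have c4 : ∑ a, |M k a| * ∑ i ∈ Sᶜ, |P' (sFun S hS a) i|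
        ≤ ∑ a, |M k a| * (‖P‖ - ∑ b, |P' (sFun S hS a) (sFun S hS b)|) :=
      Finset.sum_le_sum fun a _ => mul_le_mul_of_nonneg_left (hPa a) (abs_nonneg _)
    have c5 : ∑ a, |M k a| * (‖P‖ - ∑ b, |P' (sFun S hS a) (sFun S hS b)|)
        = ‖P‖ * (∑ a, |M k a|) - ∑ a, |M k a| * ∑ b, |P' (sFun S hS a) (sFun S hS b)| := by
      rw [Finset.mul_sum, ← Finset.sum_sub_distrib]
      exact Finset.sum_congr rfl fun a _ => by ring
    have c6 := hlow k
    rw [show 2 + (‖P‖ - 1) * ∑ a, |M k a|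
        = 2 + ‖P‖ * (∑ a, |M k a|) - ∑ a, |M k a| from by ring]
    linarith
  have hMk : ∀ k : Fin m, ∑ a, |M k a| ≤ maxRowSum M := by
    intro k
    unfold maxRowSum
    exact le_ciSup (Set.Finite.bddAbove
      (Set.finite_range (fun i : Fin m => ∑ j, |M i j|))) k
  have hfinal : ∀ k : Fin m, l1norm (hVec F S hS (sFun S hS k) (sFun_mem S hS k))
      ≤ 2 + (‖P‖ - 1) * maxRowSum M := by
    intro k
    have hstep : (‖P‖ - 1) * (∑ a, |M k a|) ≤ (‖P‖ - 1) * maxRowSum M := by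
      by_cases hp1 : 1 ≤ ‖P‖
      · exact mul_le_mul_of_nonneg_left (hMk k) (by linarith)
      · have hV0 : ∀ v ∈ Vsub f, v = 0 := by
          intro v hv
          by_contra hv0
          have h1 : ‖v‖ ≤ ‖P‖ * ‖v‖ := by
            conv_lhs => rw [← hproj1 v hv]
            exact P.le_opNorm v
          have h2 : 0 < ‖v‖ := norm_pos_iff.mpr hv0
          nlinarith
        have hP0 : P = 0 := by
          refine ContinuousLinearMap.ext fun x => ?_
          rw [hV0 (P x) (hproj2 x)]
          simp
        have hP'0 : P' = 0 := by
          rw [hP', hP0]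
          simp
        have hE1 : E = 1 := by
          rw [hEdef, hP'0]
          have hz : subSq (0 : Matrix (Fin N) (Fin N) ℝ) S hS = 0 := by
            ext a b
            simp [subSq]
          rw [hz, sub_zero]
        have hM1 : M = 1 := by rw [hMdef, hE1, inv_one]
        have hone : ∀ i : Fin m, ∑ a, |(1 : Matrix (Fin m) (Fin m) ℝ) i a| = 1 := by
          intro i
          have hterm : ∀ a ∈ univ, |(1 : Matrix (Fin m) (Fin m) ℝ) i a|
              = if i = a then (1:ℝ) else 0 := by
            intro a _
            rw [Matrix.one_apply]
            split_ifs <;> simp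
          rw [Finset.sum_congr rfl hterm]
          simp
        have hRk : ∑ a, |M k a| = 1 := by rw [hM1]; exact hone k
        have hmrs : maxRowSum M = 1 := by
          unfold maxRowSum
          rw [hM1]
          simp_rw [hone]
          exact ciSup_const
        rw [hRk, hmrs]
    linarith [habs k]
  have hsup : (⨆ k : {x // x ∈ S}, l1norm (hVec F S hS k.1 k.2))
      ≤ 2 + (‖P‖ - 1) * maxRowSum M := by
    refine ciSup_le fun kk => ?_
    have hk : sFun S hS ((S.orderIsoOfFin hS).symm kk) = kk.1 := by
      unfold sFun
      rw [OrderIso.apply_symm_apply]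
    have hh := hfinal ((S.orderIsoOfFin hS).symm kk)
    rwa [hVec_congr F S hS (sFun_mem S hS _) kk.2 hk] at hh
  linarith [hsup]

end
end

section
/- Let N ≥ 2 and let f ∈ ℝ^N be nonzero, and set V = {x ∈ ℝ^N : ⟨f,x⟩ = 0}. Then V (with the sup norm inherited from ℓ∞^N) is isometrically isomorphic to ℓ∞^{N−1} if and only if ‖f‖₁ ≤ 2·‖f‖∞. -/
open Matrix Finset

noncomputable section

lemma mem_Vsub_iff {N : ℕ} (f : Fin N → ℝ) (x : Fin N → ℝ) :
    x ∈ Vsub ![f] ↔ ∑ i, f i * x i = 0 := by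
  constructor
  · intro h; simpa using h 0
  · intro h j
    have hj : j = 0 := Subsingleton.elim j 0
    subst hj; simpa using h

theorem hyperplane_isometric_to_linf_iff
    {N : ℕ} (hN : 2 ≤ N) (f : Fin N → ℝ) (hf : f ≠ 0) :
    Nonempty ((Vsub ![f]) ≃ₗᵢ[ℝ] (Fin (N - 1) → ℝ)) ↔ l1norm f ≤ 2 * ‖f‖ := by
  obtain ⟨n, rfl⟩ : ∃ n, N = n + 2 := ⟨N - 2, by omega⟩
  constructor
  · rintro ⟨T⟩
    replace T : (Vsub ![f]) ≃ₗᵢ[ℝ] (Fin (n + 1) → ℝ) := T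
    classical
    set c : Fin (n+2) → Fin (n+1) → ℝ :=
      fun i j => ((T.symm (Pi.single j 1) : Vsub ![f]) : Fin (n+2) → ℝ) i with hc
    have key : ∀ (y : Fin (n+1) → ℝ) (i : Fin (n+2)),
        ((T.symm y : Vsub ![f]) : Fin (n+2) → ℝ) i = ∑ j, y j * c i j := by
      intro y i
      have hy : y = ∑ j, Pi.single j (y j) := by
        funext l
        rw [Finset.sum_apply]
        simp [Pi.single_apply]
      have h1 : T.symm y = ∑ j, y j • T.symm (Pi.single j 1) := by
        conv_lhs => rw [hy]
        rw [map_sum]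
        refine Finset.sum_congr rfl fun j _ => ?_
        rw [← _root_.map_smul]
        congr 1
        funext l
        simp [Pi.single_apply]
      rw [h1]
      push_cast
      rw [Finset.sum_apply]
      refine Finset.sum_congr rfl fun j _ => ?_
      simp [hc, mul_comm]
    have row : ∀ i, ∑ j, |c i j| ≤ 1 := by
      intro i
      set s : Fin (n+1) → ℝ := fun j => if c i j < 0 then -1 else 1 with hs
      have hnorm_s : ‖s‖ ≤ 1 := by
        refine (pi_norm_le_iff_of_nonneg zero_le_one).2 fun j => ?_
        rw [Real.norm_eq_abs, hs]
        by_cases h : c i j < 0 <;> simp [h]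
      have h1 : |((T.symm s : Vsub ![f]) : Fin (n+2) → ℝ) i| ≤ 1 := by
        have h2 : ‖(T.symm s : Vsub ![f])‖ ≤ 1 := by
          rw [T.symm.norm_map]; exact hnorm_s
        have h3 : ‖((T.symm s : Vsub ![f]) : Fin (n+2) → ℝ)‖ ≤ 1 := h2
        simpa [Real.norm_eq_abs] using le_trans (norm_le_pi_norm _ i) h3
      rw [key s i] at h1
      have h4 : ∀ j, s j * c i j = |c i j| := by
        intro j
        rw [hs]
        by_cases h : c i j < 0
        · simp [h, abs_of_neg h]
        · simp [h, abs_of_nonneg (not_lt.1 h)]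
      calc ∑ j, |c i j| = ∑ j, s j * c i j := by simp [h4]
      _ ≤ |∑ j, s j * c i j| := le_abs_self _
      _ ≤ 1 := h1
    have col : ∀ j, ∃ i, 1 ≤ |c i j| := by
      intro j
      have h1 : ‖(T.symm (Pi.single j 1) : Vsub ![f])‖ = 1 := by
        rw [T.symm.norm_map, Pi.norm_single]
        norm_num
      obtain ⟨i, -, hi⟩ := Finset.exists_max_image (univ : Finset (Fin (n+2)))
        (fun i => |c i j|) ⟨0, mem_univ 0⟩
      refine ⟨i, ?_⟩
      have h2 : ‖((T.symm (Pi.single j 1) : Vsub ![f]) : Fin (n+2) → ℝ)‖ ≤ |c i j| := by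
        refine (pi_norm_le_iff_of_nonneg (abs_nonneg _)).2 fun l => ?_
        rw [Real.norm_eq_abs]
        exact hi l (mem_univ l)
      calc (1:ℝ) = ‖(T.symm (Pi.single j 1) : Vsub ![f])‖ := h1.symm
      _ ≤ |c i j| := h2
    choose g hg using col
    have ginj : Function.Injective g := by
      intro j j' hjj'
      by_contra hne
      have h1 : |c (g j) j| + |c (g j) j'| ≤ ∑ l, |c (g j) l| := by
        have : ({j, j'} : Finset (Fin (n+1))) ⊆ univ := subset_univ _
        calc |c (g j) j| + |c (g j) j'| = ∑ l ∈ ({j, j'} : Finset (Fin (n+1))), |c (g j) l| := by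
              rw [Finset.sum_pair hne]
        _ ≤ ∑ l, |c (g j) l| := Finset.sum_le_sum_of_subset_of_nonneg this
              (fun _ _ _ => abs_nonneg _)
      have h2 := hg j
      have h3 := hg j'
      rw [← hjj'] at h3
      have h4 := row (g j)
      linarith
    have hnotsurj : ∃ k₀ : Fin (n+2), ∀ j, g j ≠ k₀ := by
      by_contra h
      push_neg at h
      have hsurj : Function.Surjective g := fun k₀ => h k₀
      have := Fintype.card_le_of_surjective g hsurj
      simp [Fintype.card_fin] at this
    obtain ⟨k₀, hk₀⟩ := hnotsurj
    have hzero : ∀ j l, l ≠ j → c (g j) l = 0 := by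
      intro j l hl
      have e1 : |c (g j) l| ≤ ∑ m ∈ univ.erase j, |c (g j) m| :=
        Finset.single_le_sum (f := fun m => |c (g j) m|) (fun _ _ => abs_nonneg _)
          (mem_erase.mpr ⟨hl, mem_univ l⟩)
      have e2 : |c (g j) j| + ∑ m ∈ univ.erase j, |c (g j) m| = ∑ m, |c (g j) m| :=
        Finset.add_sum_erase univ (fun m => |c (g j) m|) (mem_univ j)
      have e3 := row (g j)
      have e4 := hg j
      have : |c (g j) l| ≤ 0 := by linarith
      exact abs_nonpos_iff.1 this
    have hone : ∀ j, |c (g j) j| = 1 := by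
      intro j
      refine le_antisymm ?_ (hg j)
      have e1 : |c (g j) j| ≤ ∑ m, |c (g j) m| :=
        Finset.single_le_sum (f := fun m => |c (g j) m|) (fun _ _ => abs_nonneg _) (mem_univ j)
      linarith [row (g j)]
    have main : ∀ v ∈ Vsub ![f], ∀ B : ℝ, 0 ≤ B →
        (∀ i, i ≠ k₀ → |v i| ≤ B) → |v k₀| ≤ B := by
      intro v hv B hB hiB
      set y : Fin (n+1) → ℝ := T ⟨v, hv⟩ with hy
      have hv' : ∀ i, v i = ∑ j, y j * c i j := by
        intro i
        have h1 := key y i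
        have h2 : T.symm y = ⟨v, hv⟩ := by rw [hy]; exact T.symm_apply_apply _
        rw [h2] at h1
        simpa using h1
      have hyB : ∀ j, |y j| ≤ B := by
        intro j
        have h1 : v (g j) = y j * c (g j) j := by
          rw [hv' (g j)]
          rw [Finset.sum_eq_single j]
          · intro l _ hl
            rw [hzero j l hl, mul_zero]
          · intro h; exact absurd (mem_univ j) h
        have h2 : |v (g j)| = |y j| := by
          rw [h1, abs_mul, hone j, mul_one]
        rw [← h2]
        exact hiB (g j) (hk₀ j)
      calc |v k₀| = |∑ j, y j * c k₀ j| := by rw [hv' k₀]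
      _ ≤ ∑ j, |y j * c k₀ j| := Finset.abs_sum_le_sum_abs _ _
      _ ≤ ∑ j, B * |c k₀ j| := Finset.sum_le_sum fun j _ => by
            rw [abs_mul]
            exact mul_le_mul_of_nonneg_right (hyB j) (abs_nonneg _)
      _ = B * ∑ j, |c k₀ j| := by rw [Finset.mul_sum]
      _ ≤ B * 1 := mul_le_mul_of_nonneg_left (row k₀) hB
      _ = B := mul_one B
    -- f k₀ ≠ 0
    have hfk : f k₀ ≠ 0 := by
      intro h0
      have hv : Pi.single k₀ (1:ℝ) ∈ Vsub ![f] := by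
        rw [mem_Vsub_iff]
        rw [Finset.sum_eq_single k₀]
        · simp [h0]
        · intro l _ hl
          rw [Pi.single_eq_of_ne hl, mul_zero]
        · intro h; exact absurd (mem_univ k₀) h
      have h1 := main _ hv 0 le_rfl (fun i hi => by rw [Pi.single_eq_of_ne hi]; simp)
      rw [Pi.single_eq_same] at h1
      norm_num at h1
    set sg : Fin (n+2) → ℝ := fun i => if f i < 0 then -1 else 1 with hsg
    have hsg1 : ∀ i, |sg i| = 1 := by
      intro i; rw [hsg]; by_cases h : f i < 0 <;> simp [h]
    have hsgf : ∀ i, f i * sg i = |f i| := by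
      intro i; rw [hsg]
      by_cases h : f i < 0
      · simp [h, abs_of_neg h]
      · simp [h, abs_of_nonneg (not_lt.1 h)]
    set S : ℝ := ∑ i ∈ univ.erase k₀, |f i| with hS
    have hSnonneg : 0 ≤ S := Finset.sum_nonneg fun _ _ => abs_nonneg _
    set v : Fin (n+2) → ℝ := fun i => if i = k₀ then S / |f k₀| else -(sg i * sg k₀) with hv
    have hvmem : v ∈ Vsub ![f] := by
      rw [mem_Vsub_iff]
      rw [← Finset.add_sum_erase univ (fun i => f i * v i) (mem_univ k₀)]
      have hvk0 : v k₀ = S / |f k₀| := by simp [hv]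
      have e1 : f k₀ * v k₀ = sg k₀ * S := by
        rw [hvk0]
        by_cases h : f k₀ < 0
        · have hsgk : sg k₀ = -1 := by simp [hsg, h]
          rw [hsgk, abs_of_neg h, div_neg, mul_neg, neg_mul, neg_inj, mul_comm,
            div_mul_cancel₀ _ hfk, one_mul]
        · have hpos : 0 < f k₀ := lt_of_le_of_ne (not_lt.1 h) (Ne.symm hfk)
          have hsgk : sg k₀ = 1 := by simp [hsg, h]
          rw [hsgk, abs_of_pos hpos, one_mul, mul_comm, div_mul_cancel₀ _ hfk]
      have e2 : ∑ i ∈ univ.erase k₀, f i * v i = -(sg k₀ * S) := by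
        have step : ∀ i ∈ univ.erase k₀, f i * v i = -(sg k₀ * |f i|) := by
          intro i hi
          have hne : i ≠ k₀ := (mem_erase.1 hi).1
          have hvi : v i = -(sg i * sg k₀) := by simp [hv, hne]
          rw [hvi]
          linear_combination (-sg k₀) * hsgf i
        calc ∑ i ∈ univ.erase k₀, f i * v i = ∑ i ∈ univ.erase k₀, -(sg k₀ * |f i|) :=
              Finset.sum_congr rfl step
        _ = -(sg k₀ * S) := by rw [hS, Finset.sum_neg_distrib, Finset.mul_sum]
      rw [e1, e2]; ring
    have hmax := main v hvmem 1 zero_le_one (fun i hi => by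
      rw [hv]
      simp only [if_neg hi]
      rw [abs_neg, abs_mul, hsg1 i, hsg1 k₀]; norm_num)
    have hvk : v k₀ = S / |f k₀| := by rw [hv]; simp
    rw [hvk] at hmax
    have hmax' : S / |f k₀| ≤ 1 := le_trans (le_abs_self _) hmax
    have hfkpos : 0 < |f k₀| := abs_pos.2 hfk
    have hSle : S ≤ |f k₀| := by
      rw [div_le_one hfkpos] at hmax'
      exact hmax'
    have hl1 : l1norm f = |f k₀| + S := by
      rw [hS, l1norm, ← Finset.add_sum_erase univ (fun i => |f i|) (mem_univ k₀)]
    have hnf : |f k₀| ≤ ‖f‖ := by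
      simpa [Real.norm_eq_abs] using norm_le_pi_norm f k₀
    linarith
  · intro hle
    show Nonempty ((Vsub ![f]) ≃ₗᵢ[ℝ] (Fin (n + 1) → ℝ))
    obtain ⟨k, -, hk⟩ := Finset.exists_max_image (univ : Finset (Fin (n+2))) (fun i => |f i|)
      ⟨0, mem_univ 0⟩
    have hfk : f k ≠ 0 := by
      intro h0
      apply hf
      funext i
      have h1 := hk i (mem_univ i)
      rw [h0] at h1
      simp only [abs_zero] at h1
      have := abs_nonneg (f i)
      have : |f i| = 0 := le_antisymm h1 this
      simpa [abs_eq_zero] using this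
    have hfkpos : 0 < |f k| := abs_pos.2 hfk
    have hnormf : ‖f‖ = |f k| := by
      refine le_antisymm ((pi_norm_le_iff_of_nonneg (abs_nonneg _)).2 fun i => ?_) ?_
      · rw [Real.norm_eq_abs]; exact hk i (mem_univ i)
      · simpa [Real.norm_eq_abs] using norm_le_pi_norm f k
    have hsum : ∑ j, |f (k.succAbove j)| ≤ |f k| := by
      have h1 : l1norm f = |f k| + ∑ j, |f (k.succAbove j)| :=
        Fin.sum_univ_succAbove (fun i => |f i|) k
      rw [hnormf] at hle
      simp only [l1norm] at hle h1
      linarith [h1]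
    have bound : ∀ v ∈ Vsub ![f], ∀ B, 0 ≤ B →
        (∀ j, |v (k.succAbove j)| ≤ B) → |v k| ≤ B := by
      intro v hv B hB hj
      have h0 := (mem_Vsub_iff f v).1 hv
      rw [Fin.sum_univ_succAbove (fun i => f i * v i) k] at h0
      have h2 : |f k| * |v k| = |∑ j, f (k.succAbove j) * v (k.succAbove j)| := by
        have he : f k * v k = -(∑ j, f (k.succAbove j) * v (k.succAbove j)) := by linarith
        rw [← abs_mul, he, abs_neg]
      have h3 : |∑ j, f (k.succAbove j) * v (k.succAbove j)| ≤ ∑ j, |f (k.succAbove j)| * B :=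
        le_trans (Finset.abs_sum_le_sum_abs _ _) (Finset.sum_le_sum fun j _ => by
          rw [abs_mul]; exact mul_le_mul_of_nonneg_left (hj j) (abs_nonneg _))
      have h4 : ∑ j, |f (k.succAbove j)| * B ≤ |f k| * B := by
        rw [← Finset.sum_mul]
        exact mul_le_mul_of_nonneg_right hsum hB
      nlinarith
    have memInv : ∀ y : Fin (n+1) → ℝ,
        k.insertNth (-(∑ j, f (k.succAbove j) * y j) / f k) y ∈ Vsub ![f] := by
      intro y
      rw [mem_Vsub_iff]
      rw [Fin.sum_univ_succAbove _ k]
      simp only [Fin.insertNth_apply_same, Fin.insertNth_apply_succAbove]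
      field_simp
      ring
    let e : (Vsub ![f]) ≃ₗ[ℝ] (Fin (n+1) → ℝ) :=
      { toFun := fun v j => (v : Fin (n+2) → ℝ) (k.succAbove j)
        map_add' := fun u v => rfl
        map_smul' := fun a v => rfl
        invFun := fun y => ⟨k.insertNth (-(∑ j, f (k.succAbove j) * y j) / f k) y, memInv y⟩
        left_inv := ?_
        right_inv := ?_ }
    rotate_left
    · intro v
      apply Subtype.ext
      have h0 := (mem_Vsub_iff f v).1 v.2
      rw [Fin.sum_univ_succAbove (fun i => f i * (v : Fin (n+2) → ℝ) i) k] at h0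
      have hc : -(∑ j, f (k.succAbove j) * (v : Fin (n+2) → ℝ) (k.succAbove j)) / f k
          = (v : Fin (n+2) → ℝ) k := by
        field_simp
        linarith
      show k.insertNth (-(∑ j, f (k.succAbove j) * (v : Fin (n+2) → ℝ) (k.succAbove j)) / f k)
          (fun j => (v : Fin (n+2) → ℝ) (k.succAbove j)) = (v : Fin (n+2) → ℝ)
      rw [hc]
      exact Fin.insertNth_self_removeNth k _
    · intro y
      funext j
      simp [Fin.insertNth_apply_succAbove]
    refine ⟨⟨e, ?_⟩⟩
    · intro v
      have hcoe : ‖v‖ = ‖(v : Fin (n+2) → ℝ)‖ := rfl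
      apply le_antisymm
      · refine (pi_norm_le_iff_of_nonneg (norm_nonneg v)).2 fun j => ?_
        rw [hcoe]
        exact norm_le_pi_norm (v : Fin (n+2) → ℝ) (k.succAbove j)
      · rw [hcoe]
        set w : Fin (n+1) → ℝ := fun j => (v : Fin (n+2) → ℝ) (k.succAbove j) with hw
        refine (pi_norm_le_iff_of_nonneg (norm_nonneg w)).2 fun i => ?_
        rw [Real.norm_eq_abs]
        by_cases hi : i = k
        · subst hi
          refine bound _ v.2 _ (norm_nonneg w) fun j => ?_
          simpa [Real.norm_eq_abs] using norm_le_pi_norm w j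
        · obtain ⟨j, rfl⟩ := Fin.exists_succAbove_eq hi
          simpa [Real.norm_eq_abs] using norm_le_pi_norm w j


end
end

section
/- Let V = {x ∈ ℝ^N : ⟨f^1,x⟩ = ⋯ = ⟨f^m,x⟩ = 0} for linearly independent f^1,…,f^m ∈ ℝ^N, let S ⊆ {1,…,N} be an index set of size m with det(F_S) ≠ 0, let H ∈ ℝ^{N×m} be the matrix with columns h(S)^k, k ∈ S, and let P be a projection from ℓ∞^N onto V, written as P = I_N − Z·Hᵀ with Hᵀ·Z = I_m. Then for every c ∈ ℝ^S: (‖P‖ − 1)·Σ_{i∈S} |c_i| + Σ_{j∈S} |(Z_Sᵀ c)_j| ≥ Σ_{j∈S^c} |(H_{S^c}·Z_Sᵀ·c)_j|, where Z_S and H_{S^c} denote the row-submatrices of Z and H indexed by S and by its complement S^c, respectively, and ‖P‖ is the operator norm of P with respect to the sup norm. -/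
open Matrix Finset

noncomputable section

lemma Hrow {N m : ℕ} (F : Matrix (Fin N) (Fin m) ℝ) (S : Finset (Fin N)) (hS : S.card = m)
    (hdet : (rowSub F S hS).det ≠ 0) (l t : Fin m) :
    Hmat F S hS (S.orderIsoOfFin hS l) t = if t = l then 1 else 0 := by
  unfold Hmat hVec
  simp only [Matrix.of_apply, Subtype.coe_eta, OrderIso.symm_apply_apply]
  have hrow : (fun l' => F (S.orderIsoOfFin hS l) l') = (rowSub F S hS) l := rfl
  rw [hrow]
  by_cases h : t = l
  · subst h
    rw [Matrix.updateRow_eq_self, div_self hdet, if_pos rfl]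
  · rw [Matrix.det_updateRow_eq_zero (fun he => h he.symm), zero_div, if_neg h]

lemma row_sum_le {N : ℕ} (M : Matrix (Fin N) (Fin N) ℝ)
    (P : (Fin N → ℝ) →L[ℝ] (Fin N → ℝ))
    (hPZ : (P : (Fin N → ℝ) →ₗ[ℝ] (Fin N → ℝ)) = Matrix.toLin' M) (i : Fin N) :
    ∑ j, |M i j| ≤ ‖P‖ := by
  set x : Fin N → ℝ := fun j => if 0 ≤ M i j then 1 else -1 with hxdef
  have hx : ‖x‖ ≤ 1 := by
    rw [pi_norm_le_iff_of_nonneg zero_le_one]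
    intro j
    simp only [hxdef]
    split <;> simp
  have hPx : P x = M *ᵥ x := by
    have h := LinearMap.congr_fun hPZ x
    simpa [Matrix.toLin'_apply] using h
  have h1 : (M *ᵥ x) i = ∑ j, |M i j| := by
    simp only [Matrix.mulVec, dotProduct, hxdef]
    refine Finset.sum_congr rfl fun j _ => ?_
    split
    · rw [mul_one, abs_of_nonneg ‹_›]
    · rw [mul_neg_one, abs_of_neg (lt_of_not_ge ‹_›)]
  calc ∑ j, |M i j| = (M *ᵥ x) i := h1.symm
    _ ≤ |(M *ᵥ x) i| := le_abs_self _
    _ ≤ ‖M *ᵥ x‖ := by simpa [Real.norm_eq_abs] using norm_le_pi_norm (M *ᵥ x) i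
    _ = ‖P x‖ := by rw [hPx]
    _ ≤ ‖P‖ * ‖x‖ := P.le_opNorm x
    _ ≤ ‖P‖ * 1 := mul_le_mul_of_nonneg_left hx (norm_nonneg P)
    _ = ‖P‖ := mul_one _


theorem key_inequality_for_projections
    {N m : ℕ} (f : Fin m → Fin N → ℝ) (hf : LinearIndependent ℝ f)
    (S : Finset (Fin N)) (hS : S.card = m)
    (hdet : (rowSub (colMat f) S hS).det ≠ 0)
    (Z : Matrix (Fin N) (Fin m) ℝ) (hZ : (Hmat (colMat f) S hS)ᵀ * Z = 1)
    (P : (Fin N → ℝ) →L[ℝ] (Fin N → ℝ)) (hP : IsProjOnto (Vsub f) P)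
    (hPZ : (P : (Fin N → ℝ) →ₗ[ℝ] (Fin N → ℝ)) =
      Matrix.toLin' (1 - Z * (Hmat (colMat f) S hS)ᵀ)) :
    ∀ c : Fin m → ℝ,
      ∑ j ∈ Sᶜ, |((Hmat (colMat f) S hS) *ᵥ ((rowSub Z S hS)ᵀ *ᵥ c)) j| ≤
        (‖P‖ - 1) * (∑ i, |c i|) + ∑ j, |((rowSub Z S hS)ᵀ *ᵥ c) j| := by

  intro c
  set A := Hmat (colMat f) S hS with hA
  set M := (1 : Matrix (Fin N) (Fin N) ℝ) - Z * Aᵀ with hM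
  set w := (rowSub Z S hS)ᵀ *ᵥ c with hw
  set σ : Fin m → Fin N := fun k => (S.orderIsoOfFin hS k : Fin N) with hσdef
  have hσmem : ∀ k, σ k ∈ S := fun k => (S.orderIsoOfFin hS k).2
  have hσinj : Function.Injective σ := fun a b h =>
    (S.orderIsoOfFin hS).injective (Subtype.ext h)
  have hArow : ∀ l t : Fin m, A (σ l) t = if t = l then 1 else 0 := fun l t =>
    Hrow (colMat f) S hS hdet l t
  have hMSS : ∀ k l : Fin m, M (σ k) (σ l) = (if k = l then 1 else 0) - Z (σ k) l := by
    intro k l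
    have hsum : ∑ t, Z (σ k) t * A (σ l) t = Z (σ k) l := by
      simp only [hArow, mul_ite, mul_one, mul_zero]
      simp
    simp only [hM, Matrix.sub_apply, Matrix.one_apply, Matrix.mul_apply,
      Matrix.transpose_apply, hsum, hσinj.eq_iff]
  have hMout : ∀ (k : Fin m) (j : Fin N), j ∈ Sᶜ → |(Z * Aᵀ) (σ k) j| = |M (σ k) j| := by
    intro k j hj
    have hne : σ k ≠ j := fun h => (Finset.mem_compl.mp hj) (h ▸ hσmem k)
    have : M (σ k) j = -((Z * Aᵀ) (σ k) j) := by
      simp [hM, Matrix.sub_apply, Matrix.one_apply, hne]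
    rw [this, abs_neg]
  have hwl : ∀ l, w l = ∑ k, Z (σ k) l * c k := fun l => rfl
  have hAw : ∀ j : Fin N, (A *ᵥ w) j = ∑ k, c k * (Z * Aᵀ) (σ k) j := by
    intro j
    calc (A *ᵥ w) j = ∑ t, A j t * ∑ k, Z (σ k) t * c k := by
          simp only [Matrix.mulVec, dotProduct]
          exact Finset.sum_congr rfl fun t _ => by rw [hwl]
      _ = ∑ t, ∑ k, A j t * (Z (σ k) t * c k) := by
          exact Finset.sum_congr rfl fun t _ => Finset.mul_sum _ _ _
      _ = ∑ k, ∑ t, A j t * (Z (σ k) t * c k) := Finset.sum_comm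
      _ = ∑ k, c k * (Z * Aᵀ) (σ k) j := by
          refine Finset.sum_congr rfl fun k _ => ?_
          simp only [Matrix.mul_apply, Matrix.transpose_apply, Finset.mul_sum]
          exact Finset.sum_congr rfl fun t _ => by ring
  have hSsum : ∀ g : Fin N → ℝ, ∑ j ∈ S, g j = ∑ l, g (σ l) := by
    intro g
    rw [← Finset.sum_coe_sort S g,
      ← Equiv.sum_comp (S.orderIsoOfFin hS).toEquiv (fun x : ↥S => g ↑x)]
    rfl
  have hkey : ∀ l, |c l| ≤ |w l| + ∑ k, |c k| * |M (σ k) (σ l)| := by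
    intro l
    have h1 : c l - w l = ∑ k, c k * M (σ k) (σ l) := by
      have : ∑ k, c k * M (σ k) (σ l)
          = ∑ k, (c k * (if k = l then 1 else 0) - Z (σ k) l * c k) := by
        refine Finset.sum_congr rfl fun k _ => ?_
        rw [hMSS]; ring
      rw [this, Finset.sum_sub_distrib, ← hwl]
      simp
    calc |c l| = |w l + (c l - w l)| := by ring_nf
      _ ≤ |w l| + |c l - w l| := abs_add_le _ _
      _ ≤ |w l| + ∑ k, |c k| * |M (σ k) (σ l)| := by
          refine add_le_add le_rfl ?_
          rw [h1]
          refine (Finset.abs_sum_le_sum_abs _ _).trans (le_of_eq ?_)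
          exact Finset.sum_congr rfl fun k _ => abs_mul _ _
  have step1 : ∑ j ∈ Sᶜ, |(A *ᵥ w) j| ≤ ∑ k, |c k| * ∑ j ∈ Sᶜ, |M (σ k) j| := by
    calc ∑ j ∈ Sᶜ, |(A *ᵥ w) j| ≤ ∑ j ∈ Sᶜ, ∑ k, |c k| * |M (σ k) j| := by
          refine Finset.sum_le_sum fun j hj => ?_
          rw [hAw j]
          refine (Finset.abs_sum_le_sum_abs _ _).trans (le_of_eq ?_)
          refine Finset.sum_congr rfl fun k _ => ?_
          rw [abs_mul, hMout k j hj]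
      _ = ∑ k, |c k| * ∑ j ∈ Sᶜ, |M (σ k) j| := by
          rw [Finset.sum_comm]
          exact Finset.sum_congr rfl fun k _ => (Finset.mul_sum _ _ _).symm
  have step2 : ∀ k, ∑ j ∈ Sᶜ, |M (σ k) j| ≤ ‖P‖ - ∑ l, |M (σ k) (σ l)| := by
    intro k
    have h1 := row_sum_le M P hPZ (σ k)
    have h2 : ∑ j ∈ S, |M (σ k) j| + ∑ j ∈ Sᶜ, |M (σ k) j| = ∑ j, |M (σ k) j| :=
      Finset.sum_add_sum_compl S _
    have h3 := hSsum (fun j => |M (σ k) j|)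
    linarith
  have step3 : ∑ l, |c l| - ∑ l, |w l| ≤ ∑ k, |c k| * ∑ l, |M (σ k) (σ l)| := by
    have h := Finset.sum_le_sum (fun l (_ : l ∈ Finset.univ) => hkey l)
    rw [Finset.sum_add_distrib] at h
    have hcomm : ∑ l, ∑ k, |c k| * |M (σ k) (σ l)|
        = ∑ k, |c k| * ∑ l, |M (σ k) (σ l)| := by
      rw [Finset.sum_comm]
      exact Finset.sum_congr rfl fun k _ => (Finset.mul_sum _ _ _).symm
    linarith
  calc ∑ j ∈ Sᶜ, |(A *ᵥ w) j| ≤ ∑ k, |c k| * ∑ j ∈ Sᶜ, |M (σ k) j| := step1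
    _ ≤ ∑ k, |c k| * (‖P‖ - ∑ l, |M (σ k) (σ l)|) :=
        Finset.sum_le_sum fun k _ => mul_le_mul_of_nonneg_left (step2 k) (abs_nonneg _)
    _ = ‖P‖ * (∑ i, |c i|) - ∑ k, |c k| * ∑ l, |M (σ k) (σ l)| := by
        simp only [mul_sub]
        rw [Finset.sum_sub_distrib]
        congr 1
        rw [Finset.mul_sum]
        exact Finset.sum_congr rfl fun k _ => mul_comm _ _
    _ ≤ ‖P‖ * (∑ i, |c i|) - (∑ l, |c l| - ∑ l, |w l|) := by linarith [step3]
    _ = (‖P‖ - 1) * (∑ i, |c i|) + ∑ j, |w j| := by ring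


end
end
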